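/- arXiv:2202.13728 — 4 statements merged into one kernel-verified Lean document; each statement's English description precedes it below -/
import Mathlib

section
/- For a continuously differentiable function y on [0,T] and 0 < α < 1, the Caputo fractional derivative of the product t·y(t) satisfies ∂^α_t (t y(t)) = t ∂^α_t y(t) + α I^{1-α}_t y(t) + t^{1-α}/Γ(1-α) · y(0), where I^β_t denotes the Riemann–Liouville fractional integral. -/
open MeasureTheory intervalIntegral Real Set

/-- Riemann–Liouville fractional integral of order `β`. -/
noncomputable def fracInt (β : ℝ) (y : ℝ → ℝ) (t : ℝ) : ℝ :=
  (1 / Real.Gamma β) * ∫ s in (0:ℝ)..t, (t - s) ^ (β - 1) * y s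

/-- Caputo fractional derivative of order `α ∈ (0,1)`. -/
noncomputable def caputo (α : ℝ) (y : ℝ → ℝ) (t : ℝ) : ℝ :=
  (1 / Real.Gamma (1 - α)) * ∫ s in (0:ℝ)..t, (t - s) ^ (-α) * deriv y s

theorem caputo_product_rule (T α : ℝ) (hT : 0 < T) (hα : 0 < α ∧ α < 1)
    (y : ℝ → ℝ) (hy : ContDiffOn ℝ 1 y (Set.Icc 0 T)) :
    ∀ t ∈ Set.Ioc (0:ℝ) T,
      caputo α (fun s => s * y s) t =
        t * caputo α y t + α * fracInt (1 - α) y t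
          + t ^ (1 - α) / Real.Gamma (1 - α) * y 0 := by
  obtain ⟨hα0, hα1⟩ := hα
  intro t ht
  obtain ⟨ht0, htT⟩ := ht
  set d : ℝ → ℝ := fun s => derivWithin y (Set.Icc 0 T) s with hdd
  have hU : UniqueDiffOn ℝ (Set.Icc (0:ℝ) T) := uniqueDiffOn_Icc hT
  have hdc : ContinuousOn d (Set.Icc 0 T) := hy.continuousOn_derivWithin hU le_rfl
  have hyc : ContinuousOn y (Set.Icc 0 T) := hy.continuousOn
  have hyd : ∀ s ∈ Set.Ioo (0:ℝ) T, HasDerivAt y (d s) s := by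
    intro s hs
    have hmem : Set.Icc (0:ℝ) T ∈ nhds s := Icc_mem_nhds hs.1 hs.2
    have hda := (hy.differentiableOn one_ne_zero s (Set.Ioo_subset_Icc_self hs)).differentiableAt hmem
    have h2 : d s = deriv y s := derivWithin_of_mem_nhds hmem
    rw [h2]
    exact hda.hasDerivAt
  -- integrability of (t-s)^(-α) times a continuous function
  have hrpow : IntervalIntegrable (fun s : ℝ => (t - s) ^ (-α)) volume 0 t := by
    have h : IntervalIntegrable (fun s : ℝ => s ^ (-α)) volume 0 t :=
      intervalIntegral.intervalIntegrable_rpow' (by linarith)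
    have h2 := h.comp_sub_left t
    simpa using h2.symm
  have hmul : ∀ g : ℝ → ℝ, ContinuousOn g (Set.Icc 0 T) →
      IntervalIntegrable (fun s => (t - s) ^ (-α) * g s) volume 0 t := by
    intro g hg
    exact hrpow.mul_continuousOn
      (hg.mono (by rw [Set.uIcc_of_le ht0.le]; exact Set.Icc_subset_Icc le_rfl htT))
  have hgc : ContinuousOn (fun s : ℝ => (1 - α) * y s - (t - s) * d s) (Set.Icc 0 T) :=
    (continuousOn_const.mul hyc).sub
      (((continuous_const.sub continuous_id).continuousOn).mul hdc)
  -- key FTC identity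
  have key : (∫ s in (0:ℝ)..t, (t - s) ^ (-α) * ((1 - α) * y s - (t - s) * d s))
      = t ^ (1 - α) * y 0 := by
    have hc1 : Continuous fun x : ℝ => x ^ (1 - α) :=
      continuous_iff_continuousAt.2 fun x =>
        Real.continuousAt_rpow_const x _ (Or.inr (by linarith))
    have hcont : ContinuousOn (fun s : ℝ => -((t - s) ^ (1 - α) * y s)) (Set.Icc 0 t) := by
      apply ContinuousOn.neg
      exact ((hc1.comp (continuous_const.sub continuous_id)).continuousOn).mul
        (hyc.mono (Set.Icc_subset_Icc le_rfl htT))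
    have hderiv : ∀ s ∈ Set.Ioo (0:ℝ) t,
        HasDerivAt (fun s : ℝ => -((t - s) ^ (1 - α) * y s))
          ((t - s) ^ (-α) * ((1 - α) * y s - (t - s) * d s)) s := by
      intro s hs
      have hst : (0:ℝ) < t - s := by linarith [hs.2]
      have h1 : HasDerivAt (fun x : ℝ => t - x) (-1) s := (hasDerivAt_id s).const_sub t
      have h2 : HasDerivAt (fun x : ℝ => x ^ (1 - α)) ((1 - α) * (t - s) ^ (1 - α - 1)) (t - s) :=
        Real.hasDerivAt_rpow_const (Or.inl hst.ne')
      have h3 : HasDerivAt (fun s : ℝ => (t - s) ^ (1 - α)) ((1 - α) * (t - s) ^ (1 - α - 1) * (-1)) s :=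
        h2.comp s h1
      have h4 := (h3.mul (hyd s ⟨hs.1, lt_of_lt_of_le hs.2 htT⟩)).neg
      refine h4.congr_deriv ?_
      have e1 : (1 - α - 1 : ℝ) = -α := by ring
      have e2 : (t - s) ^ (1 - α) = (t - s) ^ (-α) * (t - s) := by
        rw [show (1 - α : ℝ) = -α + 1 by ring, Real.rpow_add hst, Real.rpow_one]
      rw [e1, e2]
      ring
    have hint := hmul _ hgc
    rw [intervalIntegral.integral_eq_sub_of_hasDerivAt_of_le ht0.le hcont hderiv hint]
    rw [sub_self, Real.zero_rpow (by linarith : (1 - α : ℝ) ≠ 0), sub_zero]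
    ring
  -- a.e. rewriting of the deriv integrands
  have haet : ∀ᵐ s : ℝ, s ≠ t := by
    have h : (volume : Measure ℝ) {t} = 0 := measure_singleton t
    exact compl_mem_ae_iff.mpr h
  have IL : (∫ s in (0:ℝ)..t, (t - s) ^ (-α) * deriv (fun u => u * y u) s)
      = ∫ s in (0:ℝ)..t, (t - s) ^ (-α) * (y s + s * d s) := by
    apply intervalIntegral.integral_congr_ae
    filter_upwards [haet] with s hst hs
    rw [Set.uIoc_of_le ht0.le] at hs
    have hsIoo : s ∈ Set.Ioo (0:ℝ) T :=
      ⟨hs.1, lt_of_lt_of_le (lt_of_le_of_ne hs.2 hst) htT⟩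
    have hprod : HasDerivAt (fun u : ℝ => u * y u) (1 * y s + s * d s) s :=
      (hasDerivAt_id s).mul (hyd s hsIoo)
    rw [hprod.deriv]
    ring
  have IR : (∫ s in (0:ℝ)..t, (t - s) ^ (-α) * deriv y s)
      = ∫ s in (0:ℝ)..t, (t - s) ^ (-α) * d s := by
    apply intervalIntegral.integral_congr_ae
    filter_upwards [haet] with s hst hs
    rw [Set.uIoc_of_le ht0.le] at hs
    have hsIoo : s ∈ Set.Ioo (0:ℝ) T :=
      ⟨hs.1, lt_of_lt_of_le (lt_of_le_of_ne hs.2 hst) htT⟩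
    rw [(hyd s hsIoo).deriv]
  have iA := hmul d hdc
  have iB := hmul y hyc
  have iC := hmul _ hgc
  have split : (∫ s in (0:ℝ)..t, (t - s) ^ (-α) * (y s + s * d s))
      = t * (∫ s in (0:ℝ)..t, (t - s) ^ (-α) * d s)
        + α * (∫ s in (0:ℝ)..t, (t - s) ^ (-α) * y s) + t ^ (1 - α) * y 0 := by
    have e : (fun s : ℝ => (t - s) ^ (-α) * (y s + s * d s))
        = fun s : ℝ => (t * ((t - s) ^ (-α) * d s) + α * ((t - s) ^ (-α) * y s))
            + (t - s) ^ (-α) * ((1 - α) * y s - (t - s) * d s) := by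
      funext s; ring
    rw [e, intervalIntegral.integral_add ((iA.const_mul t).add (iB.const_mul α)) iC,
      intervalIntegral.integral_add (iA.const_mul t) (iB.const_mul α),
      intervalIntegral.integral_const_mul, intervalIntegral.integral_const_mul, key]
  simp only [caputo, fracInt, show (1 - α - 1 : ℝ) = -α by ring]
  rw [IL, IR, split]
  ring
end

section
/- Let 0 < α < 1 and let u : [0,T] → ℝ be continuous. Then ∫_0^t ⟨I^{1-α}_s u(s), u(s)⟩ ds ≥ 0, i.e. the bilinear form v ↦ ∫_0^t u(s) · (I^{1-α}u)(s) ds is positive semidefinite on continuous functions. -/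
open MeasureTheory intervalIntegral Real Set

section helpers

lemma exp_rep {a r : ℝ} (ha : 0 < a) (hr : 0 < r) :
    ∫ θ in Ioi (0:ℝ), θ ^ (a-1) * Real.exp (-(θ * r)) = Real.Gamma a * r ^ (-a) := by
  have key : ∫ θ in Ioi (0:ℝ), θ ^ (a-1) * Real.exp (-(θ * r))
      = r ^ (1-a) * ∫ θ in Ioi (0:ℝ), (fun x => x ^ (a-1) * Real.exp (-x)) (θ * r) := by
    rw [← MeasureTheory.integral_const_mul]
    apply setIntegral_congr_fun measurableSet_Ioi
    intro θ hθ
    simp only []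
    rw [Real.mul_rpow (le_of_lt hθ) hr.le]
    rw [show (1:ℝ)-a = -(a-1) by ring, Real.rpow_neg hr.le]
    field_simp
  have sub := integral_comp_mul_right_Ioi (fun x => x ^ (a-1) * Real.exp (-x)) 0 hr
  simp only [zero_mul] at sub
  rw [key, sub]
  rw [Real.Gamma_eq_integral ha]
  have : ∫ x in Ioi (0:ℝ), x ^ (a-1) * Real.exp (-x) = ∫ x in Ioi (0:ℝ), Real.exp (-x) * x ^ (a-1) := by
    congr 1; ext x; ring
  rw [smul_eq_mul, this]
  rw [show r⁻¹ = r ^ (-1:ℝ) by rw [Real.rpow_neg_one], ← mul_assoc, ← Real.rpow_add hr]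
  ring_nf


lemma F_nonneg {θ t : ℝ} (hθ : 0 ≤ θ) (ht : 0 ≤ t) {v : ℝ → ℝ} (hv : Continuous v) :
    0 ≤ ∫ s in (0:ℝ)..t, (∫ z in (0:ℝ)..s, Real.exp (-(θ * (s - z))) * v z) * v s := by
  set g : ℝ → ℝ := fun z => Real.exp (θ * z) * v z with hg
  have hgc : Continuous g := (Real.continuous_exp.comp (continuous_const.mul continuous_id)).mul hv
  set G : ℝ → ℝ := fun s => ∫ z in (0:ℝ)..s, g z with hGdef
  have hG' : ∀ s, HasDerivAt G (g s) s := fun s => (hgc.integral_hasStrictDerivAt 0 s).hasDerivAt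
  have hGc : Continuous G := continuous_iff_continuousAt.mpr fun s => (hG' s).continuousAt
  have inner : ∀ s, (∫ z in (0:ℝ)..s, Real.exp (-(θ * (s - z))) * v z)
      = Real.exp (-(θ * s)) * G s := by
    intro s
    rw [hGdef, ← intervalIntegral.integral_const_mul]
    apply intervalIntegral.integral_congr
    intro z _
    show Real.exp (-(θ * (s - z))) * v z = Real.exp (-(θ * s)) * (Real.exp (θ * z) * v z)
    rw [← mul_assoc, ← Real.exp_add]
    ring_nf
  set q : ℝ → ℝ := fun s => Real.exp (-(2 * θ * s)) * (G s) ^ 2 with hq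
  have hqc : Continuous q :=
    (Real.continuous_exp.comp (continuous_const.mul continuous_id).neg).mul (hGc.pow 2)
  set P : ℝ → ℝ := fun s => (1/2) * Real.exp (-(2 * θ * s)) * (G s) ^ 2
      + θ * ∫ z in (0:ℝ)..s, q z with hP
  have hP' : ∀ s, HasDerivAt P ((Real.exp (-(θ * s)) * G s) * v s) s := by
    intro s
    have he : HasDerivAt (fun s => Real.exp (-(2 * θ * s))) (Real.exp (-(2 * θ * s)) * (-(2*θ))) s := by
      have : HasDerivAt (fun s : ℝ => -(2 * θ * s)) (-(2*θ)) s := by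
        simpa using ((hasDerivAt_id s).const_mul (2*θ)).fun_neg
      exact this.exp
    have h1 : HasDerivAt (fun s => (1/2) * Real.exp (-(2 * θ * s)) * (G s) ^ 2)
        ((1/2) * (Real.exp (-(2 * θ * s)) * (-(2*θ))) * (G s)^2
          + (1/2) * Real.exp (-(2 * θ * s)) * (2 * G s ^ 1 * g s)) s := by
      have := ((he.const_mul (1/2)).mul ((hG' s).pow 2))
      refine this.congr_deriv ?_
      simp only [Pi.pow_apply]; norm_num
    have h2 : HasDerivAt (fun s => θ * ∫ z in (0:ℝ)..s, q z) (θ * q s) s :=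
      ((hqc.integral_hasStrictDerivAt 0 s).hasDerivAt).const_mul θ
    have := h1.add h2
    refine this.congr_deriv ?_
    simp only [hq, hg, pow_one]
    rw [show Real.exp (-(θ * s)) * G s * v s
        = Real.exp (-(2*θ*s)) * Real.exp (θ * s) * G s * v s by
      rw [← Real.exp_add]; ring_nf]
    ring
  have key : ∫ s in (0:ℝ)..t, (Real.exp (-(θ * s)) * G s) * v s = P t - P 0 := by
    apply intervalIntegral.integral_eq_sub_of_hasDerivAt (fun s _ => hP' s)
    exact (((Real.continuous_exp.comp (continuous_const.mul continuous_id).neg).mul hGc).mul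
      hv).intervalIntegrable 0 t
  have hP0 : P 0 = 0 := by
    simp [hP, hGdef]
  have htarget : (∫ s in (0:ℝ)..t, (∫ z in (0:ℝ)..s, Real.exp (-(θ * (s - z))) * v z) * v s)
      = P t := by
    rw [show P t = P t - P 0 by rw [hP0]; ring, ← key]
    apply intervalIntegral.integral_congr
    intro s _
    show (∫ z in (0:ℝ)..s, Real.exp (-(θ * (s - z))) * v z) * v s
        = Real.exp (-(θ * s)) * G s * v s
    rw [inner s]
  rw [htarget, hP]
  have h2 : 0 ≤ θ * ∫ z in (0:ℝ)..t, q z := by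
    apply mul_nonneg hθ
    apply intervalIntegral.integral_nonneg ht
    intro z _
    simp only [hq]
    positivity
  have h1 : 0 ≤ (1/2) * Real.exp (-(2 * θ * t)) * (G t) ^ 2 := by positivity
  linarith


def Tri (t : ℝ) : Set (ℝ × ℝ) := {p | p.1 ∈ Ioc 0 t ∧ p.2 ∈ Ioo 0 p.1}

lemma measurableSet_Tri (t : ℝ) : MeasurableSet (Tri t) := by
  have : Tri t = ({p : ℝ × ℝ | 0 < p.1} ∩ {p : ℝ × ℝ | p.1 ≤ t})
      ∩ ({p : ℝ × ℝ | 0 < p.2} ∩ {p : ℝ × ℝ | p.2 < p.1}) := by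
    ext p; simp [Tri, and_assoc]
  rw [this]
  exact (((measurableSet_lt measurable_const measurable_fst).inter
      (measurableSet_le measurable_fst measurable_const)).inter
    ((measurableSet_lt measurable_const measurable_snd).inter
      (measurableSet_lt measurable_snd measurable_fst)))

lemma slice_mem {t s : ℝ} (hs : s ∈ Ioc (0:ℝ) t) (f : ℝ × ℝ → ℝ) :
    (fun z => (Tri t).indicator f (s, z)) = (Ioo (0:ℝ) s).indicator (fun z => f (s, z)) := by
  ext z
  by_cases hz : z ∈ Ioo (0:ℝ) s
  · rw [indicator_of_mem hz, indicator_of_mem (show (s, z) ∈ Tri t from ⟨hs, hz⟩)]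
  · rw [indicator_of_notMem hz,
      indicator_of_notMem (show (s, z) ∉ Tri t from fun h => hz h.2)]

lemma slice_not_mem {t s : ℝ} (hs : s ∉ Ioc (0:ℝ) t) (f : ℝ × ℝ → ℝ) :
    (fun z => (Tri t).indicator f (s, z)) = fun _ => 0 := by
  ext z
  exact indicator_of_notMem (show (s, z) ∉ Tri t from fun h => hs h.1) f

lemma base_intervalIntegrable {a : ℝ} (ha0 : 0 < a) (ha1 : a < 1) (s : ℝ) :
    IntervalIntegrable (fun z : ℝ => (s - z) ^ (-a)) volume 0 s := by
  have h := (intervalIntegrable_rpow' (a := s) (b := 0)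
    (by linarith : (-1:ℝ) < -a)).comp_sub_left s
  simpa using h

lemma base_integrableOn {a : ℝ} (ha0 : 0 < a) (ha1 : a < 1) {s : ℝ} (hs : 0 ≤ s) :
    IntegrableOn (fun z : ℝ => (s - z) ^ (-a)) (Ioo 0 s) :=
  ((intervalIntegrable_iff_integrableOn_Ioc_of_le hs).mp
    (base_intervalIntegrable ha0 ha1 s)).mono_set Ioo_subset_Ioc_self

lemma base_value {a : ℝ} (ha0 : 0 < a) (ha1 : a < 1) {s : ℝ} (hs : 0 ≤ s) :
    ∫ z in Ioo (0:ℝ) s, (s - z) ^ (-a) = s ^ (1 - a) / (1 - a) := by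
  rw [← integral_Ioc_eq_integral_Ioo, ← intervalIntegral.integral_of_le hs]
  rw [intervalIntegral.integral_comp_sub_left (fun x => x ^ (-a)) s]
  simp only [sub_self, sub_zero]
  rw [integral_rpow (Or.inl (by linarith))]
  rw [Real.zero_rpow (by linarith : -a + 1 ≠ 0)]
  rw [show -a + 1 = 1 - a by ring]
  ring

lemma integrableOn_tri {t a : ℝ} (ht : 0 ≤ t) (ha0 : 0 < a) (ha1 : a < 1) {v w : ℝ → ℝ}
    (hv : Continuous v) (hw : Continuous w) :
    IntegrableOn (fun p : ℝ × ℝ => (p.1 - p.2) ^ (-a) * v p.2 * w p.1) (Tri t) := by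
  set F : ℝ × ℝ → ℝ := fun p => (p.1 - p.2) ^ (-a) * v p.2 * w p.1 with hF
  obtain ⟨Mv, hMv⟩ := (isCompact_Icc (a := (0:ℝ)) (b := t)).exists_bound_of_continuousOn
    hv.continuousOn
  obtain ⟨Mw, hMw⟩ := (isCompact_Icc (a := (0:ℝ)) (b := t)).exists_bound_of_continuousOn
    hw.continuousOn
  have hMv0 : 0 ≤ Mv := le_trans (norm_nonneg _) (hMv 0 (left_mem_Icc.mpr ht))
  have hMw0 : 0 ≤ Mw := le_trans (norm_nonneg _) (hMw 0 (left_mem_Icc.mpr ht))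
  have Fmeas : Measurable F := by fun_prop
  have hm := measurableSet_Tri t
  apply (integrable_indicator_iff (μ := volume) hm).mp
  rw [show (volume : Measure (ℝ × ℝ)) = (volume : Measure ℝ).prod volume from
      Measure.volume_eq_prod ℝ ℝ]
  have hmeas : AEStronglyMeasurable ((Tri t).indicator F) ((volume : Measure ℝ).prod volume) :=
    (Fmeas.indicator hm).aestronglyMeasurable
  -- slice integrability
  have hslice : ∀ s ∈ Ioc (0:ℝ) t, IntegrableOn (fun z => F (s, z)) (Ioo 0 s) := by
    intro s hs
    have hbase := base_integrableOn ha0 ha1 hs.1.le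
    have : Integrable (fun z => (v z * w s) * ((s - z) ^ (-a)))
        (volume.restrict (Ioo 0 s)) := by
      apply hbase.bdd_mul (c := Mv * Mw)
        ((hv.measurable.mul measurable_const).aestronglyMeasurable)
      refine (ae_restrict_iff' measurableSet_Ioo).mpr (Filter.Eventually.of_forall ?_)
      intro z hz
      have hzIcc : z ∈ Icc (0:ℝ) t := ⟨hz.1.le, hz.2.le.trans hs.2⟩
      have hsIcc : s ∈ Icc (0:ℝ) t := ⟨hs.1.le, hs.2⟩
      calc ‖v z * w s‖ = ‖v z‖ * ‖w s‖ := norm_mul _ _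
        _ ≤ Mv * Mw := mul_le_mul (hMv z hzIcc) (hMw s hsIcc) (norm_nonneg _) hMv0
    exact this.congr (Filter.Eventually.of_forall fun z => by simp [hF]; ring)
  -- bound for the marginal
  set C : ℝ := Mv * Mw * (t ^ (1 - a) / (1 - a)) with hC
  have hbound : ∀ s ∈ Ioc (0:ℝ) t, ∫ z in Ioo (0:ℝ) s, ‖F (s, z)‖ ≤ C := by
    intro s hs
    have hbase := base_integrableOn ha0 ha1 hs.1.le
    have step1 : ∫ z in Ioo (0:ℝ) s, ‖F (s, z)‖
        ≤ ∫ z in Ioo (0:ℝ) s, (Mv * Mw) * ((s - z) ^ (-a)) := by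
      apply setIntegral_mono_on ((hslice s hs).norm) (hbase.const_mul _) measurableSet_Ioo
      intro z hz
      have hzIcc : z ∈ Icc (0:ℝ) t := ⟨hz.1.le, hz.2.le.trans hs.2⟩
      have hsIcc : s ∈ Icc (0:ℝ) t := ⟨hs.1.le, hs.2⟩
      have hpos : (0:ℝ) ≤ (s - z) ^ (-a) := Real.rpow_nonneg (by linarith [hz.2]) _
      have : ‖F (s, z)‖ = (s - z) ^ (-a) * (‖v z‖ * ‖w s‖) := by
        simp [hF, abs_mul, abs_of_nonneg hpos, Real.norm_eq_abs, mul_assoc]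
      rw [this]
      rw [mul_comm (Mv * Mw) _]
      apply mul_le_mul_of_nonneg_left _ hpos
      exact mul_le_mul (hMv z hzIcc) (hMw s hsIcc) (norm_nonneg _) hMv0
    have step2 : ∫ z in Ioo (0:ℝ) s, (Mv * Mw) * ((s - z) ^ (-a))
        = (Mv * Mw) * (s ^ (1 - a) / (1 - a)) := by
      rw [MeasureTheory.integral_const_mul, base_value ha0 ha1 hs.1.le]
    have step3 : (Mv * Mw) * (s ^ (1 - a) / (1 - a)) ≤ C := by
      rw [hC]
      have hst : s ^ (1 - a) ≤ t ^ (1 - a) := Real.rpow_le_rpow hs.1.le hs.2 (by linarith)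
      gcongr
    linarith
  refine (integrable_prod_iff hmeas).mpr ⟨?_, ?_⟩
  · refine Filter.Eventually.of_forall fun s => ?_
    by_cases hs : s ∈ Ioc (0:ℝ) t
    · rw [slice_mem hs F]
      exact (integrable_indicator_iff measurableSet_Ioo).mpr (hslice s hs)
    · rw [slice_not_mem hs F]
      exact integrable_zero _ _ _
  · apply Integrable.mono' (g := (Ioc (0:ℝ) t).indicator fun _ => C)
    · exact (integrable_indicator_iff measurableSet_Ioc).mpr
        (integrableOn_const measure_Ioc_lt_top.ne)
    · exact hmeas.norm.integral_prod_right'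
    · refine Filter.Eventually.of_forall fun s => ?_
      by_cases hs : s ∈ Ioc (0:ℝ) t
      · have hpt : ∀ z, (Tri t).indicator F (s, z)
            = (Ioo (0:ℝ) s).indicator (fun z => F (s, z)) z :=
          fun z => congrFun (slice_mem hs F) z
        simp only [hpt]
        rw [Real.norm_eq_abs, abs_of_nonneg (integral_nonneg fun z => norm_nonneg _)]
        simp only [norm_indicator_eq_indicator_norm]
        rw [MeasureTheory.integral_indicator measurableSet_Ioo, indicator_of_mem hs]
        exact hbound s hs
      · have hpt : ∀ z, (Tri t).indicator F (s, z) = 0 :=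
          fun z => congrFun (slice_not_mem hs F) z
        simp [hpt, indicator_of_notMem hs]

lemma tri_integral_eq {t : ℝ} (f : ℝ × ℝ → ℝ) (hf : IntegrableOn f (Tri t)) :
    ∫ p in Tri t, f p = ∫ s in Ioc (0:ℝ) t, ∫ z in Ioo (0:ℝ) s, f (s, z) := by
  have hm := measurableSet_Tri t
  rw [← MeasureTheory.integral_indicator hm]
  have hint : Integrable ((Tri t).indicator f) := (integrable_indicator_iff hm).mpr hf
  rw [Measure.volume_eq_prod] at hint
  rw [show (volume : Measure (ℝ × ℝ)) = (volume : Measure ℝ).prod volume from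
    Measure.volume_eq_prod ℝ ℝ]
  rw [MeasureTheory.integral_prod _ hint]
  have h1 : ∀ s : ℝ, (∫ z, (Tri t).indicator f (s, z))
      = (Ioc (0:ℝ) t).indicator (fun s => ∫ z in Ioo (0:ℝ) s, f (s, z)) s := by
    intro s
    by_cases hs : s ∈ Ioc (0:ℝ) t
    · rw [indicator_of_mem hs, ← MeasureTheory.integral_indicator measurableSet_Ioo]
      congr 1
      ext z
      by_cases hz : z ∈ Ioo (0:ℝ) s
      · rw [indicator_of_mem hz, indicator_of_mem (show (s, z) ∈ Tri t from ⟨hs, hz⟩)]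
      · rw [indicator_of_notMem hz,
          indicator_of_notMem (show (s, z) ∉ Tri t from fun h => hz h.2)]
    · rw [indicator_of_notMem hs]
      have hz : ∀ z : ℝ, (Tri t).indicator f (s, z) = 0 := fun z =>
        indicator_of_notMem (show (s, z) ∉ Tri t from fun h => hs h.1) f
      simp [hz]
  simp_rw [h1]
  rw [MeasureTheory.integral_indicator measurableSet_Ioc]

lemma integrableOn_tri_exp {t θ : ℝ} (ht : 0 ≤ t) (hθ : 0 ≤ θ) {v : ℝ → ℝ}
    (hv : Continuous v) :
    IntegrableOn (fun p : ℝ × ℝ => Real.exp (-(θ * (p.1 - p.2))) * v p.2 * v p.1) (Tri t) := by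
  obtain ⟨M, hM⟩ := (isCompact_Icc (a := (0:ℝ)) (b := t)).exists_bound_of_continuousOn
    hv.continuousOn
  have hM0 : 0 ≤ M := le_trans (norm_nonneg _) (hM 0 (left_mem_Icc.mpr ht))
  apply Measure.integrableOn_of_bounded (M := 1 * (M * M))
  · have hsub : Tri t ⊆ Icc (0:ℝ) t ×ˢ Icc (0:ℝ) t := by
      rintro ⟨s, z⟩ ⟨hs, hz⟩
      exact ⟨⟨hs.1.le, hs.2⟩, ⟨hz.1.le, hz.2.le.trans hs.2⟩⟩
    exact ne_of_lt (lt_of_le_of_lt (measure_mono hsub)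
      ((isCompact_Icc.prod isCompact_Icc).measure_lt_top))
  · exact ((by fun_prop : Continuous fun p : ℝ × ℝ =>
      Real.exp (-(θ * (p.1 - p.2))) * v p.2 * v p.1)).aestronglyMeasurable
  · refine (ae_restrict_iff' (measurableSet_Tri t)).mpr (Filter.Eventually.of_forall ?_)
    rintro ⟨s, z⟩ ⟨hs, hz⟩
    have h1 : Real.exp (-(θ * (s - z))) ≤ 1 := by
      rw [Real.exp_le_one_iff]
      have : 0 ≤ θ * (s - z) := mul_nonneg hθ (by linarith [hz.2])
      linarith
    have h2 : ‖v z‖ ≤ M := hM z ⟨hz.1.le, hz.2.le.trans hs.2⟩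
    have h3 : ‖v s‖ ≤ M := hM s ⟨hs.1.le, hs.2⟩
    calc ‖Real.exp (-(θ * (s - z))) * v z * v s‖
        = Real.exp (-(θ * (s - z))) * (‖v z‖ * ‖v s‖) := by
          rw [norm_mul, norm_mul, Real.norm_eq_abs (Real.exp _),
            abs_of_pos (Real.exp_pos _), mul_assoc]
      _ ≤ 1 * (M * M) := by
          apply mul_le_mul h1 (mul_le_mul h2 h3 (norm_nonneg _) hM0)
            (mul_nonneg (norm_nonneg _) (norm_nonneg _)) zero_le_one

lemma integrable_W {t a : ℝ} (ht : 0 ≤ t) (ha0 : 0 < a) (ha1 : a < 1) {v : ℝ → ℝ}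
    (hv : Continuous v) :
    Integrable (Function.uncurry fun (p : ℝ × ℝ) (θ : ℝ) =>
        θ ^ (a - 1) * Real.exp (-(θ * (p.1 - p.2))) * v p.2 * v p.1)
      ((volume.restrict (Tri t)).prod (volume.restrict (Ioi 0))) := by
  have hmeas : AEStronglyMeasurable (Function.uncurry fun (p : ℝ × ℝ) (θ : ℝ) =>
      θ ^ (a - 1) * Real.exp (-(θ * (p.1 - p.2))) * v p.2 * v p.1)
      ((volume.restrict (Tri t)).prod (volume.restrict (Ioi 0))) := by
    apply Measurable.aestronglyMeasurable
    show Measurable fun q : (ℝ × ℝ) × ℝ =>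
      q.2 ^ (a - 1) * Real.exp (-(q.2 * (q.1.1 - q.1.2))) * v q.1.2 * v q.1.1
    fun_prop
  refine (integrable_prod_iff hmeas).mpr ⟨?_, ?_⟩
  · refine (ae_restrict_iff' (measurableSet_Tri t)).mpr (Filter.Eventually.of_forall ?_)
    rintro ⟨s, z⟩ ⟨hs, hz⟩
    have hr : 0 < s - z := by linarith [hz.2]
    have comp : IntegrableOn
        (fun θ : ℝ => Real.exp (-(θ * (s - z))) * (θ * (s - z)) ^ (a - 1)) (Ioi 0) := by
      have h := (integrableOn_Ioi_comp_mul_right_iff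
        (fun x : ℝ => Real.exp (-x) * x ^ (a - 1)) 0 hr).mpr
      simp only [zero_mul] at h
      exact h (Real.GammaIntegral_convergent ha0)
    apply Integrable.congr (comp.const_mul ((s - z) ^ (1 - a) * (v z * v s)))
    refine (ae_restrict_iff' measurableSet_Ioi).mpr (Filter.Eventually.of_forall ?_)
    intro θ hθ
    show (s - z) ^ (1 - a) * (v z * v s) * (Real.exp (-(θ * (s - z))) * (θ * (s - z)) ^ (a - 1))
        = θ ^ (a - 1) * Real.exp (-(θ * (s - z))) * v z * v s
    rw [Real.mul_rpow (le_of_lt hθ) hr.le]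
    rw [show (s - z) ^ (1 - a) * (v z * v s) *
          (Real.exp (-(θ * (s - z))) * (θ ^ (a - 1) * (s - z) ^ (a - 1)))
        = ((s - z) ^ (1 - a) * (s - z) ^ (a - 1)) *
          (θ ^ (a - 1) * Real.exp (-(θ * (s - z))) * v z * v s) by ring]
    rw [← Real.rpow_add hr]
    norm_num
  · have hrep : ∀ᵐ p ∂(volume.restrict (Tri t)),
        Real.Gamma a * ((p.1 - p.2) ^ (-a) * |v p.2| * |v p.1|)
          = ∫ θ in Ioi (0:ℝ), ‖θ ^ (a - 1) * Real.exp (-(θ * (p.1 - p.2))) * v p.2 * v p.1‖ := by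
      refine (ae_restrict_iff' (measurableSet_Tri t)).mpr (Filter.Eventually.of_forall ?_)
      rintro ⟨s, z⟩ ⟨hs, hz⟩
      have hr : 0 < s - z := by linarith [hz.2]
      have hcongr : ∫ θ in Ioi (0:ℝ), ‖θ ^ (a - 1) * Real.exp (-(θ * (s - z))) * v z * v s‖
          = ∫ θ in Ioi (0:ℝ), θ ^ (a - 1) * Real.exp (-(θ * (s - z))) * (|v z| * |v s|) := by
        apply setIntegral_congr_fun measurableSet_Ioi
        intro θ hθ
        have h1 : (0:ℝ) ≤ θ ^ (a - 1) := Real.rpow_nonneg (le_of_lt hθ) _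
        simp only [Real.norm_eq_abs, abs_mul, abs_of_nonneg h1,
          abs_of_pos (Real.exp_pos _)]
        ring
      rw [hcongr, MeasureTheory.integral_mul_const, exp_rep ha0 hr]
      ring
    apply Integrable.congr _ hrep
    exact ((integrableOn_tri ht ha0 ha1 hv.abs hv.abs).const_mul (Real.Gamma a))


lemma main_v {t a : ℝ} (ht : 0 ≤ t) (ha0 : 0 < a) (ha1 : a < 1) {v : ℝ → ℝ}
    (hv : Continuous v) :
    0 ≤ ∫ s in (0:ℝ)..t, (∫ z in (0:ℝ)..s, (s - z) ^ (-a) * v z) * v s := by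
  have hF : IntegrableOn (fun p : ℝ × ℝ => (p.1 - p.2) ^ (-a) * v p.2 * v p.1) (Tri t) :=
    integrableOn_tri ht ha0 ha1 hv hv
  -- step 1: rewrite target as integral over the triangle
  have step1 : ∫ s in (0:ℝ)..t, (∫ z in (0:ℝ)..s, (s - z) ^ (-a) * v z) * v s
      = ∫ p in Tri t, (p.1 - p.2) ^ (-a) * v p.2 * v p.1 := by
    rw [tri_integral_eq _ hF, intervalIntegral.integral_of_le ht]
    apply setIntegral_congr_fun measurableSet_Ioc
    intro s hs
    show (∫ z in (0:ℝ)..s, (s - z) ^ (-a) * v z) * v s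
        = ∫ z in Ioo (0:ℝ) s, (s - z) ^ (-a) * v z * v s
    rw [← intervalIntegral.integral_mul_const, intervalIntegral.integral_of_le hs.1.le,
      integral_Ioc_eq_integral_Ioo]
  rw [step1]
  -- step 2: Fubini with the Gamma representation
  have hswap := MeasureTheory.integral_integral_swap (integrable_W ht ha0 ha1 hv)
  have lhs_eq : (∫ p in Tri t, ∫ θ in Ioi (0:ℝ),
        θ ^ (a - 1) * Real.exp (-(θ * (p.1 - p.2))) * v p.2 * v p.1)
      = Real.Gamma a * ∫ p in Tri t, (p.1 - p.2) ^ (-a) * v p.2 * v p.1 := by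
    rw [← MeasureTheory.integral_const_mul]
    apply setIntegral_congr_fun (measurableSet_Tri t)
    rintro ⟨s, z⟩ ⟨hs, hz⟩
    have hr : 0 < s - z := by linarith [hz.2]
    have : ∫ θ in Ioi (0:ℝ), θ ^ (a - 1) * Real.exp (-(θ * (s - z))) * v z * v s
        = ∫ θ in Ioi (0:ℝ), θ ^ (a - 1) * Real.exp (-(θ * (s - z))) * (v z * v s) := by
      apply setIntegral_congr_fun measurableSet_Ioi
      intro θ _
      ring
    show (∫ θ in Ioi (0:ℝ), θ ^ (a - 1) * Real.exp (-(θ * (s - z))) * v z * v s)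
        = Real.Gamma a * ((s - z) ^ (-a) * v z * v s)
    rw [this, MeasureTheory.integral_mul_const, exp_rep ha0 hr]
    ring
  have rhs_nonneg : 0 ≤ ∫ θ in Ioi (0:ℝ), ∫ p in Tri t,
      θ ^ (a - 1) * Real.exp (-(θ * (p.1 - p.2))) * v p.2 * v p.1 := by
    apply setIntegral_nonneg measurableSet_Ioi
    intro θ hθ
    have hpull : (∫ p in Tri t, θ ^ (a - 1) * Real.exp (-(θ * (p.1 - p.2))) * v p.2 * v p.1)
        = θ ^ (a - 1) * ∫ p in Tri t, Real.exp (-(θ * (p.1 - p.2))) * v p.2 * v p.1 := by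
      rw [← MeasureTheory.integral_const_mul]
      apply setIntegral_congr_fun (measurableSet_Tri t)
      intro p _
      ring
    rw [hpull]
    apply mul_nonneg (Real.rpow_nonneg (le_of_lt hθ) _)
    rw [tri_integral_eq _ (integrableOn_tri_exp ht (le_of_lt hθ) hv)]
    have conv : (∫ s in Ioc (0:ℝ) t, ∫ z in Ioo (0:ℝ) s,
          Real.exp (-(θ * (s - z))) * v z * v s)
        = ∫ s in (0:ℝ)..t, (∫ z in (0:ℝ)..s, Real.exp (-(θ * (s - z))) * v z) * v s := by
      rw [intervalIntegral.integral_of_le ht]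
      apply setIntegral_congr_fun measurableSet_Ioc
      intro s hs
      show (∫ z in Ioo (0:ℝ) s, Real.exp (-(θ * (s - z))) * v z * v s)
          = (∫ z in (0:ℝ)..s, Real.exp (-(θ * (s - z))) * v z) * v s
      rw [← intervalIntegral.integral_mul_const, intervalIntegral.integral_of_le hs.1.le,
        integral_Ioc_eq_integral_Ioo]
    rw [conv]
    exact F_nonneg (le_of_lt hθ) ht hv
  rw [← hswap, lhs_eq] at rhs_nonneg
  exact (mul_nonneg_iff_of_pos_left (Real.Gamma_pos_of_pos ha0)).mp rhs_nonneg


end helpers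

theorem fracInt_quadratic_nonneg (T α : ℝ) (hT : 0 < T) (hα : 0 < α ∧ α < 1)
    (u : ℝ → ℝ) (hu : ContinuousOn u (Set.Icc 0 T)) :
    ∀ t ∈ Set.Icc (0:ℝ) T,
      0 ≤ ∫ s in (0:ℝ)..t, fracInt (1 - α) u s * u s := by
  intro t htmem
  obtain ⟨ht0, htT⟩ := htmem
  set v : ℝ → ℝ := fun x => u (max 0 (min T x)) with hvdef
  have hvc : Continuous v := by
    apply hu.comp_continuous (continuous_const.max (continuous_const.min continuous_id))
    intro x
    exact ⟨le_max_left _ _, max_le hT.le (min_le_left _ _)⟩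
  have hveq : ∀ x ∈ Icc (0:ℝ) T, v x = u x := by
    intro x hx
    rw [hvdef]
    simp only [min_eq_right hx.2, max_eq_right hx.1]
  have hcongr : ∫ s in (0:ℝ)..t, fracInt (1 - α) u s * u s
      = ∫ s in (0:ℝ)..t, fracInt (1 - α) v s * v s := by
    apply intervalIntegral.integral_congr
    intro s hs
    rw [uIcc_of_le ht0] at hs
    have hsT : s ∈ Icc (0:ℝ) T := ⟨hs.1, hs.2.trans htT⟩
    have hfrac : fracInt (1 - α) u s = fracInt (1 - α) v s := by
      unfold fracInt
      congr 1
      apply intervalIntegral.integral_congr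
      intro z hz
      rw [uIcc_of_le hs.1] at hz
      show (s - z) ^ (1 - α - 1) * u z = (s - z) ^ (1 - α - 1) * v z
      rw [hveq z ⟨hz.1, hz.2.trans hsT.2⟩]
    show fracInt (1 - α) u s * u s = fracInt (1 - α) v s * v s
    rw [hfrac, hveq s hsT]
  rw [hcongr]
  have hunfold : ∫ s in (0:ℝ)..t, fracInt (1 - α) v s * v s
      = (1 / Real.Gamma (1 - α))
          * ∫ s in (0:ℝ)..t, (∫ z in (0:ℝ)..s, (s - z) ^ (-α) * v z) * v s := by
    rw [← intervalIntegral.integral_const_mul]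
    apply intervalIntegral.integral_congr
    intro s _
    show fracInt (1 - α) v s * v s
        = 1 / Real.Gamma (1 - α) * ((∫ z in (0:ℝ)..s, (s - z) ^ (-α) * v z) * v s)
    unfold fracInt
    rw [show (1 - α - 1 : ℝ) = -α by ring]
    ring
  rw [hunfold]
  apply mul_nonneg
  · have := Real.Gamma_pos_of_pos (show (0:ℝ) < 1 - α by linarith [hα.2])
    positivity
  · exact main_v ht0 hα.1 hα.2 hvc
end

section
/- Let 0 < α < 1 and let u : [0,T] → ℝ be continuously differentiable with u(0) = 0. Then there exists a constant C = C(α) > 0 such that ∫_0^t (I^{1-α} u')(s) u'(s) ds ≥ C t^{-α} |u(t)|² for all t ∈ (0,T]. -/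
open MeasureTheory intervalIntegral Real Set

namespace FracCoercive

/-- `A l s = ∫_0^s e^{l z} w z dz`. -/
noncomputable def expInt (w : ℝ → ℝ) (l s : ℝ) : ℝ := ∫ z in (0:ℝ)..s, Real.exp (l * z) * w z

lemma hasDerivAt_expInt {w : ℝ → ℝ} (hw : Continuous w) (l s : ℝ) :
    HasDerivAt (expInt w l) (Real.exp (l * s) * w s) s := by
  apply intervalIntegral.integral_hasDerivAt_right
  · exact ((Real.continuous_exp.comp (continuous_const.mul continuous_id)).mul hw).intervalIntegrable _ _
  · exact ((Real.continuous_exp.comp (continuous_const.mul continuous_id)).mul hw).stronglyMeasurableAtFilter _ _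
  · exact ((Real.continuous_exp.comp (continuous_const.mul continuous_id)).mul hw).continuousAt

lemma continuous_expInt_pair {w : ℝ → ℝ} (hw : Continuous w) :
    Continuous (fun p : ℝ × ℝ => expInt w p.2 p.1) := by
  apply continuous_parametric_intervalIntegral_of_continuous (f := fun (p : ℝ × ℝ) z => Real.exp (p.2 * z) * w z)
  · exact ((Real.continuous_exp.comp ((continuous_snd.comp continuous_fst).mul continuous_snd)).mul
      (hw.comp continuous_snd))
  · exact continuous_fst

lemma continuous_expInt {w : ℝ → ℝ} (hw : Continuous w) (l : ℝ) : Continuous (expInt w l) := by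
  have := (continuous_expInt_pair hw).comp ((continuous_id.prodMk (continuous_const : Continuous fun _ : ℝ => l)))
  exact this

end FracCoercive

namespace FracCoercive

lemma sq_integral_le {f : ℝ → ℝ} (hf : Continuous f) {t : ℝ} (ht : 0 < t) :
    (∫ s in (0:ℝ)..t, f s) ^ 2 ≤ t * ∫ s in (0:ℝ)..t, (f s) ^ 2 := by
  set m : ℝ := (∫ s in (0:ℝ)..t, f s) / t with hm
  have h0 : (0:ℝ) ≤ ∫ s in (0:ℝ)..t, (f s - m) ^ 2 :=
    intervalIntegral.integral_nonneg ht.le (fun s _ => sq_nonneg _)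
  have hexp : ∀ s, (f s - m) ^ 2 = (f s) ^ 2 - (2 * m) * f s + m ^ 2 := by intro s; ring
  rw [intervalIntegral.integral_congr (g := fun s => (f s) ^ 2 - (2 * m) * f s + m ^ 2)
    (fun s _ => hexp s)] at h0
  rw [intervalIntegral.integral_add (f := fun s => f s ^ 2 - 2 * m * f s) (g := fun _ => m ^ 2)
      (((hf.pow 2).intervalIntegrable _ _).sub
      ((continuous_const.mul hf).intervalIntegrable _ _))
      (intervalIntegrable_const),
    intervalIntegral.integral_sub (f := fun s => f s ^ 2) (g := fun s => 2 * m * f s) ((hf.pow 2).intervalIntegrable _ _)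
      ((continuous_const.mul hf).intervalIntegrable _ _),
    intervalIntegral.integral_const_mul, intervalIntegral.integral_const] at h0
  simp only [sub_zero, smul_eq_mul] at h0
  set J : ℝ := (∫ s in (0:ℝ)..t, f s) with hJ
  have e1 : 2 * m * J = 2 * (J ^ 2 / t) := by rw [hm]; field_simp
  have e2 : t * m ^ 2 = J ^ 2 / t := by rw [hm]; field_simp
  have h1 : J ^ 2 / t ≤ ∫ s in (0:ℝ)..t, (f s) ^ 2 := by
    rw [e1, e2] at h0; linarith
  rw [div_le_iff₀ ht] at h1
  linarith
end FracCoercive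

namespace FracCoercive

lemma ibp_main {w : ℝ → ℝ} (hw : Continuous w) (l t : ℝ) :
    ∫ s in (0:ℝ)..t, w s * (Real.exp (-(l * s)) * expInt w l s) =
      Real.exp (-(2 * l * t)) * (expInt w l t) ^ 2 / 2
        + l * ∫ s in (0:ℝ)..t, Real.exp (-(2 * l * s)) * (expInt w l s) ^ 2 := by
  have hA : Continuous (expInt w l) := continuous_expInt hw l
  have hP : ∀ s : ℝ, HasDerivAt (fun r => Real.exp (-(2 * l * r)) * (expInt w l r) ^ 2 / 2)
      (w s * (Real.exp (-(l * s)) * expInt w l s)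
        - l * (Real.exp (-(2 * l * s)) * (expInt w l s) ^ 2)) s := by
    intro s
    have hlin : HasDerivAt (fun r : ℝ => -(2 * l * r)) (-(2 * l)) s := by
      have h := ((hasDerivAt_id s).const_mul (2 * l)).neg
      simp only [id, mul_one] at h
      exact h
    have hE : HasDerivAt (fun r => Real.exp (-(2 * l * r))) (Real.exp (-(2 * l * s)) * -(2 * l)) s :=
      hlin.exp
    have hsq : HasDerivAt (fun r => (expInt w l r) ^ 2)
        (2 * (expInt w l s) ^ 1 * (Real.exp (l * s) * w s)) s := (hasDerivAt_expInt hw l s).pow 2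
    have := (hE.mul hsq).div_const 2
    refine this.congr_deriv ?_
    have hrel : Real.exp (-(2 * l * s)) * Real.exp (l * s) = Real.exp (-(l * s)) := by
      rw [← Real.exp_add]; ring_nf
    linear_combination (expInt w l s * w s) * hrel
  have hint : IntervalIntegrable (fun s => w s * (Real.exp (-(l * s)) * expInt w l s)
      - l * (Real.exp (-(2 * l * s)) * (expInt w l s) ^ 2)) MeasureTheory.volume 0 t := by
    apply Continuous.intervalIntegrable
    fun_prop
  have hftc := intervalIntegral.integral_eq_sub_of_hasDerivAt (fun x _ => hP x) hint
  have hA0 : expInt w l 0 = 0 := intervalIntegral.integral_same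
  rw [intervalIntegral.integral_sub (by apply Continuous.intervalIntegrable; fun_prop)
    (by apply Continuous.intervalIntegrable; fun_prop),
    intervalIntegral.integral_const_mul] at hftc
  rw [hA0] at hftc
  simp only [mul_zero, zero_mul, ne_eq, OfNat.ofNat_ne_zero, not_false_eq_true, zero_pow,
    zero_div, sub_zero] at hftc
  linarith [hftc]

lemma ibp_total {w : ℝ → ℝ} (hw : Continuous w) (l t : ℝ) :
    ∫ z in (0:ℝ)..t, w z =
      Real.exp (-(l * t)) * expInt w l t
        + l * ∫ z in (0:ℝ)..t, Real.exp (-(l * z)) * expInt w l z := by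
  have hA : Continuous (expInt w l) := continuous_expInt hw l
  have hQ : ∀ s : ℝ, HasDerivAt (fun r => Real.exp (-(l * r)) * expInt w l r)
      (w s - l * (Real.exp (-(l * s)) * expInt w l s)) s := by
    intro s
    have hlin : HasDerivAt (fun r : ℝ => -(l * r)) (-l) s := by
      have h := ((hasDerivAt_id s).const_mul l).neg
      simp only [id, mul_one] at h
      exact h
    have hE : HasDerivAt (fun r => Real.exp (-(l * r))) (Real.exp (-(l * s)) * -l) s := hlin.exp
    have := hE.mul (hasDerivAt_expInt hw l s)
    refine this.congr_deriv ?_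
    have hrel : Real.exp (-(l * s)) * Real.exp (l * s) = Real.exp 0 := by
      rw [← Real.exp_add]; ring_nf
    rw [Real.exp_zero] at hrel
    linear_combination (w s) * hrel
  have hint : IntervalIntegrable (fun s => w s - l * (Real.exp (-(l * s)) * expInt w l s))
      MeasureTheory.volume 0 t := by
    apply Continuous.intervalIntegrable; fun_prop
  have hftc := intervalIntegral.integral_eq_sub_of_hasDerivAt (fun x _ => hQ x) hint
  have hA0 : expInt w l 0 = 0 := intervalIntegral.integral_same
  rw [intervalIntegral.integral_sub (hw.intervalIntegrable _ _)
    (by apply Continuous.intervalIntegrable; fun_prop),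
    intervalIntegral.integral_const_mul] at hftc
  rw [hA0] at hftc
  simp only [mul_zero, sub_zero] at hftc
  linarith [hftc]

end FracCoercive

namespace FracCoercive

lemma per_lambda_alg (D I S X l t : ℝ) (hX : 1 + l*t ≤ X) (hCS : I^2 ≤ t*S) (hS : 0 ≤ S)
    (hl : 0 < l) (ht : 0 < t) : (D + l*I)^2 ≤ X*(D^2 + 2*l*S) := by
  have hX1 : 0 < X - 1 := by nlinarith [mul_pos hl ht]
  have h1 : 0 ≤ ((X-1)*D - l*I)^2 := sq_nonneg _
  have h2 : l^2*I^2 ≤ l^2*(t*S) := by nlinarith [sq_nonneg l]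
  have h3 : l*t*S ≤ (X-1)*S := by nlinarith
  nlinarith [mul_pos hX1 hX1, mul_nonneg hX1.le hS, mul_nonneg (mul_nonneg hX1.le hl.le) hS,
    mul_le_mul_of_nonneg_left h3 (mul_pos hl hX1).le]

lemma per_lambda {w : ℝ → ℝ} (hw : Continuous w) {t l : ℝ} (ht : 0 < t) (hl : 0 < l) :
    Real.exp (-(l * t)) * (∫ z in (0:ℝ)..t, w z) ^ 2 / 2 ≤
      ∫ s in (0:ℝ)..t, w s * (Real.exp (-(l * s)) * expInt w l s) := by
  set A : ℝ → ℝ := expInt w l with hA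
  set D : ℝ := Real.exp (-(l * t)) * A t with hD
  set I : ℝ := ∫ z in (0:ℝ)..t, Real.exp (-(l * z)) * A z with hI
  set S : ℝ := ∫ s in (0:ℝ)..t, Real.exp (-(2 * l * s)) * (A s) ^ 2 with hS
  have hAc : Continuous A := continuous_expInt hw l
  have hU : (∫ z in (0:ℝ)..t, w z) = D + l * I := ibp_total hw l t
  have hRHS : (∫ s in (0:ℝ)..t, w s * (Real.exp (-(l * s)) * A s))
      = Real.exp (-(2 * l * t)) * (A t) ^ 2 / 2 + l * S := ibp_main hw l t
  have hD2 : Real.exp (-(2 * l * t)) * (A t) ^ 2 = D ^ 2 := by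
    have h : Real.exp (-(l*t)) * Real.exp (-(l*t)) = Real.exp (-(2*l*t)) := by
      rw [← Real.exp_add]; ring_nf
    rw [hD]; linear_combination (A t)^2 * h.symm
  have hCS : I ^ 2 ≤ t * S := by
    have h := sq_integral_le (f := fun z => Real.exp (-(l * z)) * A z)
      (by fun_prop) ht
    have he : ∀ z : ℝ, (Real.exp (-(l * z)) * A z) ^ 2
        = Real.exp (-(2 * l * z)) * (A z) ^ 2 := by
      intro z
      have h2 : Real.exp (-(l*z)) * Real.exp (-(l*z)) = Real.exp (-(2*l*z)) := by
        rw [← Real.exp_add]; ring_nf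
      linear_combination (A z)^2 * h2
    rw [intervalIntegral.integral_congr (g := fun z => Real.exp (-(2 * l * z)) * (A z) ^ 2)
      (fun z _ => he z)] at h
    exact h
  have hSnn : 0 ≤ S := by
    apply intervalIntegral.integral_nonneg ht.le
    intro s _
    positivity
  have hX : 1 + l * t ≤ Real.exp (l * t) := by linarith [Real.add_one_le_exp (l * t)]
  have key := per_lambda_alg D I S (Real.exp (l*t)) l t hX hCS hSnn hl ht
  have hEX : Real.exp (-(l*t)) * Real.exp (l*t) = 1 := by
    rw [← Real.exp_add]; simp
  rw [hU, hRHS, hD2]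
  have hexpnn : (0:ℝ) ≤ Real.exp (-(l*t)) := (Real.exp_pos _).le
  calc Real.exp (-(l * t)) * (D + l * I) ^ 2 / 2
      ≤ Real.exp (-(l * t)) * (Real.exp (l*t) * (D ^ 2 + 2 * l * S)) / 2 := by
        apply div_le_div_of_nonneg_right ?_ (by norm_num)
        · exact mul_le_mul_of_nonneg_left key hexpnn
    _ = D ^ 2 / 2 + l * S := by
        rw [← mul_assoc, hEX]; ring

end FracCoercive

namespace FracCoercive

lemma integrableOn_gamma_integrand {α x : ℝ} (hα : 0 < α) (hx : 0 < x) :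
    IntegrableOn (fun l : ℝ => l ^ (α - 1) * Real.exp (-(x * l))) (Ioi (0:ℝ)) := by
  have h := integrableOn_rpow_mul_exp_neg_mul_rpow (by linarith : (-1:ℝ) < α - 1)
    zero_lt_one hx
  refine h.congr_fun (fun l hl => ?_) measurableSet_Ioi
  simp only [Real.rpow_one]
  ring_nf

/-- The dominating function `l ↦ l^(α-1) (1 - e^{-l s})/l` is integrable on `(0,∞)`. -/
lemma integrableOn_gfun {α s : ℝ} (hα0 : 0 < α) (hα1 : α < 1) (hs : 0 ≤ s) :
    IntegrableOn (fun l : ℝ => l ^ (α - 1) * ((1 - Real.exp (-(l * s))) / l)) (Ioi (0:ℝ)) := by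
  have hmeas : Measurable fun l : ℝ => l ^ (α - 1) * ((1 - Real.exp (-(l * s))) / l) := by
    fun_prop
  have hsplit : Ioi (0:ℝ) = Ioc (0:ℝ) 1 ∪ Ioi (1:ℝ) := (Ioc_union_Ioi_eq_Ioi zero_le_one).symm
  rw [hsplit]
  apply MeasureTheory.IntegrableOn.union
  · -- on (0,1]: dominated by s * l^(α-1)
    have hbase : IntegrableOn (fun l : ℝ => l ^ (α - 1)) (Ioc (0:ℝ) 1) := by
      have := intervalIntegrable_rpow' (a := 0) (b := 1) (by linarith : (-1:ℝ) < α - 1)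
      rwa [intervalIntegrable_iff_integrableOn_Ioc_of_le zero_le_one] at this
    apply Integrable.mono' (hbase.const_mul s) hmeas.aestronglyMeasurable
    filter_upwards [ae_restrict_mem measurableSet_Ioc] with l hl
    have hl0 : 0 < l := hl.1
    have hfrac0 : 0 ≤ (1 - Real.exp (-(l * s))) / l := by
      apply div_nonneg _ hl0.le
      have : Real.exp (-(l * s)) ≤ 1 := Real.exp_le_one_iff.mpr (neg_nonpos.mpr (by positivity))
      linarith
    have hfrac : (1 - Real.exp (-(l * s))) / l ≤ s := by
      rw [div_le_iff₀ hl0]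
      have := Real.add_one_le_exp (-(l * s))
      nlinarith [Real.exp_pos (-(l*s))]
    rw [Real.norm_eq_abs, abs_of_nonneg (by positivity)]
    calc l ^ (α - 1) * ((1 - Real.exp (-(l * s))) / l) ≤ l ^ (α - 1) * s :=
          mul_le_mul_of_nonneg_left hfrac (by positivity)
      _ = s * l ^ (α - 1) := by ring
  · -- on (1,∞): dominated by l^(α-2)
    have hbase : IntegrableOn (fun l : ℝ => l ^ (α - 2)) (Ioi (1:ℝ)) :=
      integrableOn_Ioi_rpow_of_lt (by linarith) one_pos
    apply Integrable.mono' hbase hmeas.aestronglyMeasurable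
    filter_upwards [ae_restrict_mem measurableSet_Ioi] with l hl
    have hl0 : (0:ℝ) < l := lt_trans one_pos hl
    have h1 : Real.exp (-(l * s)) ≤ 1 := Real.exp_le_one_iff.mpr (neg_nonpos.mpr (by positivity))
    have hfrac : (1 - Real.exp (-(l * s))) / l ≤ 1 / l := by
      gcongr
      linarith [Real.exp_pos (-(l * s))]
    have hfrac0 : 0 ≤ (1 - Real.exp (-(l * s))) / l := by
      apply div_nonneg _ hl0.le
      linarith
    rw [Real.norm_eq_abs, abs_of_nonneg (by positivity)]
    calc l ^ (α - 1) * ((1 - Real.exp (-(l * s))) / l) ≤ l ^ (α - 1) * (1 / l) := by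
          apply mul_le_mul_of_nonneg_left hfrac (by positivity)
      _ = l ^ (α - 2) := by
          rw [one_div, ← Real.rpow_neg_one l, ← Real.rpow_add hl0]
          norm_num
          ring_nf

end FracCoercive

namespace FracCoercive

lemma exp_kernel_integral {l : ℝ} (s : ℝ) (hl : 0 < l) :
    ∫ z in (0:ℝ)..s, Real.exp (-(l * (s - z))) = (1 - Real.exp (-(l * s))) / l := by
  have hderiv : ∀ z : ℝ, HasDerivAt (fun z => Real.exp (-(l * (s - z))) / l)
      (Real.exp (-(l * (s - z)))) z := by
    intro z
    have h0 : HasDerivAt (fun z : ℝ => -(l * (s - z))) (-(l * -1)) z :=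
      (((hasDerivAt_id z).const_sub s).const_mul l).neg
    have := (h0.exp).div_const l
    refine this.congr_deriv ?_
    field_simp
  have := intervalIntegral.integral_eq_sub_of_hasDerivAt (f := fun z => Real.exp (-(l * (s - z))) / l)
    (a := (0:ℝ)) (b := s)
    (fun z _ => hderiv z) (by apply Continuous.intervalIntegrable; fun_prop)
  rw [this]
  simp [sub_self]
  ring

lemma expInt_kernel_form {w : ℝ → ℝ} (l s : ℝ) :
    Real.exp (-(l * s)) * expInt w l s = ∫ z in (0:ℝ)..s, Real.exp (-(l * (s - z))) * w z := by
  rw [expInt, ← intervalIntegral.integral_const_mul]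
  apply intervalIntegral.integral_congr
  intro z _
  show Real.exp (-(l * s)) * (Real.exp (l * z) * w z) = Real.exp (-(l * (s - z))) * w z
  rw [← mul_assoc, ← Real.exp_add]
  ring_nf

lemma expInt_bound {w : ℝ → ℝ} (hw : Continuous w) {M : ℝ} (hM : ∀ z, |w z| ≤ M)
    {l s : ℝ} (hl : 0 < l) (hs : 0 ≤ s) :
    |Real.exp (-(l * s)) * expInt w l s| ≤ M * ((1 - Real.exp (-(l * s))) / l) := by
  rw [expInt_kernel_form]
  have h1 : |∫ z in (0:ℝ)..s, Real.exp (-(l * (s - z))) * w z|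
      ≤ ∫ z in (0:ℝ)..s, Real.exp (-(l * (s - z))) * |w z| := by
    simpa [Real.norm_eq_abs] using
      intervalIntegral.norm_integral_le_integral_norm (f := fun z => Real.exp (-(l * (s - z))) * w z)
        (μ := MeasureTheory.volume) hs
  refine h1.trans ?_
  have h2 : ∫ z in (0:ℝ)..s, Real.exp (-(l * (s - z))) * |w z|
      ≤ ∫ z in (0:ℝ)..s, M * Real.exp (-(l * (s - z))) := by
    apply intervalIntegral.integral_mono_on hs
    · apply Continuous.intervalIntegrable
      exact (by fun_prop : Continuous fun z => Real.exp (-(l * (s - z)))).mul hw.abs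
    · apply Continuous.intervalIntegrable; fun_prop
    · intro z _
      calc Real.exp (-(l * (s - z))) * |w z| ≤ Real.exp (-(l * (s - z))) * M :=
            mul_le_mul_of_nonneg_left (hM z) (Real.exp_pos _).le
        _ = M * Real.exp (-(l * (s - z))) := by ring
  refine h2.trans ?_
  rw [intervalIntegral.integral_const_mul, exp_kernel_integral s hl]

end FracCoercive

namespace FracCoercive

lemma laplace_rep {α x : ℝ} (hα : 0 < α) (hx : 0 < x) :
    ∫ l in Ioi (0:ℝ), l ^ (α - 1) * Real.exp (-(x * l)) = Real.Gamma α * x ^ (-α) := by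
  rw [Real.integral_rpow_mul_exp_neg_mul_Ioi hα hx, one_div, Real.inv_rpow hx.le,
    ← Real.rpow_neg hx.le]
  ring

lemma kernel_abs_integral_le {w : ℝ → ℝ} (hw : Continuous w) {M : ℝ} (hM : ∀ z, |w z| ≤ M)
    {l s : ℝ} (hl : 0 < l) (hs : 0 ≤ s) :
    ∫ z in (0:ℝ)..s, Real.exp (-(l * (s - z))) * |w z| ≤ M * ((1 - Real.exp (-(l * s))) / l) := by
  have h2 : ∫ z in (0:ℝ)..s, Real.exp (-(l * (s - z))) * |w z|
      ≤ ∫ z in (0:ℝ)..s, M * Real.exp (-(l * (s - z))) := by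
    apply intervalIntegral.integral_mono_on hs
    · apply Continuous.intervalIntegrable
      exact (by fun_prop : Continuous fun z => Real.exp (-(l * (s - z)))).mul hw.abs
    · apply Continuous.intervalIntegrable; fun_prop
    · intro z _
      calc Real.exp (-(l * (s - z))) * |w z| ≤ Real.exp (-(l * (s - z))) * M :=
            mul_le_mul_of_nonneg_left (hM z) (Real.exp_pos _).le
        _ = M * Real.exp (-(l * (s - z))) := by ring
  refine h2.trans ?_
  rw [intervalIntegral.integral_const_mul, exp_kernel_integral s hl]

lemma fubini_inner_integrable {w : ℝ → ℝ} {α : ℝ} (hα0 : 0 < α) (hα1 : α < 1)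
    (hw : Continuous w) {M : ℝ} (hM : ∀ z, |w z| ≤ M) (hM0 : 0 ≤ M) {s : ℝ} (hs : 0 < s) :
    Integrable (Function.uncurry fun l z => l ^ (α - 1) * (Real.exp (-(l * (s - z))) * w z))
      ((MeasureTheory.volume.restrict (Ioi (0:ℝ))).prod
        (MeasureTheory.volume.restrict (Ioc (0:ℝ) s))) := by
  have hmeas : Measurable (Function.uncurry fun l z : ℝ =>
      l ^ (α - 1) * (Real.exp (-(l * (s - z))) * w z)) := by
    unfold Function.uncurry; fun_prop
  rw [MeasureTheory.integrable_prod_iff hmeas.aestronglyMeasurable]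
  constructor
  · filter_upwards with l
    simp only [Function.uncurry_apply_pair]
    apply Continuous.integrableOn_Ioc
    fun_prop
  · apply MeasureTheory.Integrable.mono'
      ((integrableOn_gfun hα0 hα1 hs.le).const_mul M)
      (hmeas.aestronglyMeasurable.norm.integral_prod_right')
    filter_upwards [MeasureTheory.ae_restrict_mem measurableSet_Ioi] with l hl
    simp only [Function.uncurry_apply_pair]
    have hl0 : (0:ℝ) < l := hl
    have hnn : 0 ≤ ∫ z in Ioc (0:ℝ) s, ‖l ^ (α - 1) * (Real.exp (-(l * (s - z))) * w z)‖ :=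
      MeasureTheory.integral_nonneg (fun z => norm_nonneg _)
    rw [Real.norm_eq_abs, abs_of_nonneg hnn]
    have heq : ∀ z : ℝ, ‖l ^ (α - 1) * (Real.exp (-(l * (s - z))) * w z)‖
        = l ^ (α - 1) * (Real.exp (-(l * (s - z))) * |w z|) := by
      intro z
      rw [Real.norm_eq_abs, abs_mul, abs_mul, abs_of_nonneg (Real.rpow_nonneg hl0.le _),
        abs_of_nonneg (Real.exp_pos _).le]
    calc ∫ z in Ioc (0:ℝ) s, ‖l ^ (α - 1) * (Real.exp (-(l * (s - z))) * w z)‖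
        = l ^ (α - 1) * ∫ z in Ioc (0:ℝ) s, Real.exp (-(l * (s - z))) * |w z| := by
          rw [← MeasureTheory.integral_const_mul]
          exact MeasureTheory.integral_congr_ae (Filter.Eventually.of_forall (fun z => heq z))
      _ = l ^ (α - 1) * ∫ z in (0:ℝ)..s, Real.exp (-(l * (s - z))) * |w z| := by
          rw [intervalIntegral.integral_of_le hs.le]
      _ ≤ l ^ (α - 1) * (M * ((1 - Real.exp (-(l * s))) / l)) :=
          mul_le_mul_of_nonneg_left (kernel_abs_integral_le hw hM hl0 hs.le)
            (Real.rpow_nonneg hl0.le _)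
      _ = M * (l ^ (α - 1) * ((1 - Real.exp (-(l * s))) / l)) := by ring

end FracCoercive

namespace FracCoercive

lemma fubini_inner {w : ℝ → ℝ} {α : ℝ} (hα0 : 0 < α) (hα1 : α < 1)
    (hw : Continuous w) {M : ℝ} (hM : ∀ z, |w z| ≤ M) {s : ℝ} (hs : 0 < s) :
    ∫ l in Ioi (0:ℝ), l ^ (α - 1) * (Real.exp (-(l * s)) * expInt w l s)
      = Real.Gamma α * ∫ z in (0:ℝ)..s, (s - z) ^ (-α) * w z := by
  have hM0 : 0 ≤ M := le_trans (abs_nonneg _) (hM 0)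
  have hint := fubini_inner_integrable hα0 hα1 hw hM hM0 hs
  have hswap := MeasureTheory.integral_integral_swap hint
  have hL : ∀ l : ℝ, (∫ z in Ioc (0:ℝ) s, l ^ (α - 1) * (Real.exp (-(l * (s - z))) * w z))
      = l ^ (α - 1) * (Real.exp (-(l * s)) * expInt w l s) := by
    intro l
    rw [MeasureTheory.integral_const_mul, ← intervalIntegral.integral_of_le hs.le,
      ← expInt_kernel_form]
  have hR : (∫ z in Ioc (0:ℝ) s, ∫ l in Ioi (0:ℝ), l ^ (α - 1) * (Real.exp (-(l * (s - z))) * w z))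
      = Real.Gamma α * ∫ z in (0:ℝ)..s, (s - z) ^ (-α) * w z := by
    rw [MeasureTheory.integral_Ioc_eq_integral_Ioo,
      MeasureTheory.setIntegral_congr_fun (μ := MeasureTheory.volume) measurableSet_Ioo
        (g := fun z => Real.Gamma α * ((s - z) ^ (-α) * w z)) ?_]
    · rw [MeasureTheory.integral_const_mul, intervalIntegral.integral_of_le hs.le,
        MeasureTheory.integral_Ioc_eq_integral_Ioo]
    · intro z hz
      have hsz : 0 < s - z := by
        have := hz.2
        simp only [mem_Ioo] at hz
        linarith [hz.2]
      calc ∫ l in Ioi (0:ℝ), l ^ (α - 1) * (Real.exp (-(l * (s - z))) * w z)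
          = (∫ l in Ioi (0:ℝ), l ^ (α - 1) * Real.exp (-((s - z) * l))) * w z := by
            rw [← MeasureTheory.integral_mul_const]
            congr 1; funext l; rw [mul_comm l (s - z)]; ring
        _ = Real.Gamma α * (s - z) ^ (-α) * w z := by rw [laplace_rep hα0 hsz]
        _ = Real.Gamma α * ((s - z) ^ (-α) * w z) := by ring
  calc ∫ l in Ioi (0:ℝ), l ^ (α - 1) * (Real.exp (-(l * s)) * expInt w l s)
      = ∫ l in Ioi (0:ℝ), ∫ z in Ioc (0:ℝ) s, l ^ (α - 1) * (Real.exp (-(l * (s - z))) * w z) := by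
        exact (MeasureTheory.integral_congr_ae (Filter.Eventually.of_forall (fun l => (hL l).symm)))
    _ = _ := by rw [hswap]; exact hR

end FracCoercive

namespace FracCoercive

lemma core_bound {α : ℝ} (hα0 : 0 < α) (hα1 : α < 1) {w : ℝ → ℝ} (hw : Continuous w)
    {M : ℝ} (hM : ∀ z, |w z| ≤ M) {t : ℝ} (ht : 0 < t) :
    t ^ (-α) * (∫ z in (0:ℝ)..t, w z) ^ 2 / 2 ≤
      ∫ s in (0:ℝ)..t, (∫ z in (0:ℝ)..s, (s - z) ^ (-α) * w z) * w s := by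
  have hM0 : 0 ≤ M := le_trans (abs_nonneg _) (hM 0)
  set U : ℝ := ∫ z in (0:ℝ)..t, w z with hU
  have hΓ : 0 < Real.Gamma α := Real.Gamma_pos_of_pos hα0
  have hcE : Continuous fun p : ℝ × ℝ => expInt w p.2 p.1 := continuous_expInt_pair hw
  -- the uncurried function for the outer Fubini
  set F : ℝ × ℝ → ℝ := fun p => w p.1 * (p.2 ^ (α - 1) * (Real.exp (-(p.2 * p.1)) * expInt w p.2 p.1)) with hF
  have hmeasF : Measurable F := by
    apply Measurable.mul (hw.comp continuous_fst).measurable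
    apply Measurable.mul
    · exact (by fun_prop : Measurable fun p : ℝ × ℝ => p.2 ^ (α - 1))
    · exact ((by fun_prop : Measurable fun p : ℝ × ℝ => Real.exp (-(p.2 * p.1))).mul
        hcE.measurable)
  -- slice integrability in l, for fixed s ∈ (0, t]
  have hslice : ∀ s : ℝ, 0 < s →
      Integrable (fun l => F (s, l)) (MeasureTheory.volume.restrict (Ioi (0:ℝ))) := by
    intro s hs
    apply MeasureTheory.Integrable.mono'
      ((integrableOn_gfun hα0 hα1 hs.le).const_mul (M * M))
      ((hmeasF.comp (measurable_const.prodMk measurable_id)).aestronglyMeasurable)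
    filter_upwards [MeasureTheory.ae_restrict_mem measurableSet_Ioi] with l hl
    have hl0 : (0:ℝ) < l := hl
    show ‖w s * (l ^ (α - 1) * (Real.exp (-(l * s)) * expInt w l s))‖ ≤ _
    rw [Real.norm_eq_abs, abs_mul, abs_mul, abs_of_nonneg (Real.rpow_nonneg hl0.le _)]
    calc |w s| * (l ^ (α - 1) * |Real.exp (-(l * s)) * expInt w l s|)
        ≤ M * (l ^ (α - 1) * (M * ((1 - Real.exp (-(l * s))) / l))) := by
          apply mul_le_mul (hM s)
          · exact mul_le_mul_of_nonneg_left (expInt_bound hw hM hl0 hs.le)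
              (Real.rpow_nonneg hl0.le _)
          · positivity
          · exact hM0
      _ = M * M * (l ^ (α - 1) * ((1 - Real.exp (-(l * s))) / l)) := by ring
  -- pointwise norm bound uniform in s ∈ (0,t]
  have hnormb : ∀ s l : ℝ, 0 < s → s ≤ t → 0 < l →
      ‖F (s, l)‖ ≤ M * M * (l ^ (α - 1) * ((1 - Real.exp (-(l * t))) / l)) := by
    intro s l hs hst hl0
    show ‖w s * (l ^ (α - 1) * (Real.exp (-(l * s)) * expInt w l s))‖ ≤ _
    rw [Real.norm_eq_abs, abs_mul, abs_mul, abs_of_nonneg (Real.rpow_nonneg hl0.le _)]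
    have hmono : (1 - Real.exp (-(l * s))) / l ≤ (1 - Real.exp (-(l * t))) / l := by
      gcongr
    calc |w s| * (l ^ (α - 1) * |Real.exp (-(l * s)) * expInt w l s|)
        ≤ M * (l ^ (α - 1) * (M * ((1 - Real.exp (-(l * s))) / l))) := by
          apply mul_le_mul (hM s)
          · exact mul_le_mul_of_nonneg_left (expInt_bound hw hM hl0 hs.le)
              (Real.rpow_nonneg hl0.le _)
          · positivity
          · exact hM0
      _ ≤ M * (l ^ (α - 1) * (M * ((1 - Real.exp (-(l * t))) / l))) := by
          apply mul_le_mul_of_nonneg_left _ hM0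
          apply mul_le_mul_of_nonneg_left _ (Real.rpow_nonneg hl0.le _)
          exact mul_le_mul_of_nonneg_left hmono hM0
      _ = M * M * (l ^ (α - 1) * ((1 - Real.exp (-(l * t))) / l)) := by ring
  -- product integrability
  have hprod : Integrable F
      ((MeasureTheory.volume.restrict (Ioc (0:ℝ) t)).prod
        (MeasureTheory.volume.restrict (Ioi (0:ℝ)))) := by
    rw [MeasureTheory.integrable_prod_iff hmeasF.aestronglyMeasurable]
    constructor
    · filter_upwards [MeasureTheory.ae_restrict_mem measurableSet_Ioc] with s hs
      exact hslice s hs.1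
    · set K : ℝ := ∫ l in Ioi (0:ℝ), M * M * (l ^ (α - 1) * ((1 - Real.exp (-(l * t))) / l))
        with hK
      apply MeasureTheory.Integrable.mono'
        (MeasureTheory.integrableOn_const (C := K) measure_Ioc_lt_top.ne)
        (hmeasF.aestronglyMeasurable.norm.integral_prod_right')
      filter_upwards [MeasureTheory.ae_restrict_mem measurableSet_Ioc] with s hs
      have hnn : 0 ≤ ∫ l in Ioi (0:ℝ), ‖F (s, l)‖ :=
        MeasureTheory.integral_nonneg (fun l => norm_nonneg _)
      rw [Real.norm_eq_abs, abs_of_nonneg hnn]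
      calc (∫ l in Ioi (0:ℝ), ‖F (s, l)‖)
          ≤ ∫ l in Ioi (0:ℝ), M * M * (l ^ (α - 1) * ((1 - Real.exp (-(l * t))) / l)) := by
            apply MeasureTheory.integral_mono_ae ((hslice s hs.1).norm)
              ((integrableOn_gfun hα0 hα1 ht.le).const_mul (M * M))
            filter_upwards [MeasureTheory.ae_restrict_mem measurableSet_Ioi] with l hl
            exact hnormb s l hs.1 hs.2 hl
        _ = K := hK.symm
  -- the swap
  have hswap : (∫ s in Ioc (0:ℝ) t, ∫ l in Ioi (0:ℝ), F (s, l))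
      = ∫ l in Ioi (0:ℝ), ∫ s in Ioc (0:ℝ) t, F (s, l) :=
    MeasureTheory.integral_integral_swap (f := fun s l => F (s, l))
      (by exact hprod)
  -- evaluate the left side via fubini_inner
  have hLHS : (∫ s in Ioc (0:ℝ) t, ∫ l in Ioi (0:ℝ), F (s, l))
      = Real.Gamma α * ∫ s in (0:ℝ)..t, (∫ z in (0:ℝ)..s, (s - z) ^ (-α) * w z) * w s := by
    rw [MeasureTheory.integral_Ioc_eq_integral_Ioo]
    rw [MeasureTheory.setIntegral_congr_fun (μ := MeasureTheory.volume) measurableSet_Ioo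
      (g := fun s => Real.Gamma α * ((∫ z in (0:ℝ)..s, (s - z) ^ (-α) * w z) * w s)) ?_]
    · rw [MeasureTheory.integral_const_mul, intervalIntegral.integral_of_le ht.le,
        MeasureTheory.integral_Ioc_eq_integral_Ioo]
    · intro s hs
      simp only [mem_Ioo] at hs
      have heval : (∫ l in Ioi (0:ℝ), F (s, l))
          = w s * ∫ l in Ioi (0:ℝ), l ^ (α - 1) * (Real.exp (-(l * s)) * expInt w l s) :=
        calc (∫ l in Ioi (0:ℝ), F (s, l))
            = ∫ l in Ioi (0:ℝ), w s * (l ^ (α - 1) * (Real.exp (-(l * s)) * expInt w l s)) := rfl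
          _ = _ := MeasureTheory.integral_const_mul _ _
      show (∫ l in Ioi (0:ℝ), F (s, l)) = _
      rw [heval, fubini_inner hα0 hα1 hw hM hs.1]
      ring
  -- lower bound the right side via per_lambda
  have hRHS : (∫ l in Ioi (0:ℝ), l ^ (α - 1) * (Real.exp (-(l * t)) * (U ^ 2 / 2)))
      ≤ ∫ l in Ioi (0:ℝ), ∫ s in Ioc (0:ℝ) t, F (s, l) := by
    apply MeasureTheory.integral_mono_ae
    · apply MeasureTheory.Integrable.congr
        ((integrableOn_gamma_integrand hα0 ht).mul_const (U ^ 2 / 2))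
      filter_upwards with l
      rw [mul_comm t l]
      ring
    · exact hprod.integral_prod_right
    · filter_upwards [MeasureTheory.ae_restrict_mem measurableSet_Ioi] with l hl
      have hl0 : (0:ℝ) < l := hl
      have hinner : (∫ s in Ioc (0:ℝ) t, F (s, l))
          = l ^ (α - 1) * ∫ s in (0:ℝ)..t, w s * (Real.exp (-(l * s)) * expInt w l s) := by
        rw [intervalIntegral.integral_of_le ht.le, ← MeasureTheory.integral_const_mul]
        apply MeasureTheory.integral_congr_ae
        filter_upwards with s
        show w s * (l ^ (α - 1) * (Real.exp (-(l * s)) * expInt w l s)) = _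
        ring
      rw [hinner]
      calc l ^ (α - 1) * (Real.exp (-(l * t)) * (U ^ 2 / 2))
          = l ^ (α - 1) * (Real.exp (-(l * t)) * U ^ 2 / 2) := by ring
        _ ≤ l ^ (α - 1) * ∫ s in (0:ℝ)..t, w s * (Real.exp (-(l * s)) * expInt w l s) :=
            mul_le_mul_of_nonneg_left (per_lambda hw ht hl0) (Real.rpow_nonneg hl0.le _)
  -- evaluate the gamma integral
  have hGam : (∫ l in Ioi (0:ℝ), l ^ (α - 1) * (Real.exp (-(l * t)) * (U ^ 2 / 2)))
      = Real.Gamma α * t ^ (-α) * (U ^ 2 / 2) := by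
    have h1 : (∫ l in Ioi (0:ℝ), l ^ (α - 1) * (Real.exp (-(l * t)) * (U ^ 2 / 2)))
        = (∫ l in Ioi (0:ℝ), l ^ (α - 1) * Real.exp (-(t * l))) * (U ^ 2 / 2) := by
      rw [← MeasureTheory.integral_mul_const]
      apply MeasureTheory.integral_congr_ae
      filter_upwards with l
      rw [mul_comm t l]; ring
    rw [h1, laplace_rep hα0 ht]
  -- put everything together
  have main : Real.Gamma α * t ^ (-α) * (U ^ 2 / 2)
      ≤ Real.Gamma α * ∫ s in (0:ℝ)..t, (∫ z in (0:ℝ)..s, (s - z) ^ (-α) * w z) * w s := by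
    rw [← hGam, ← hLHS]
    rw [hswap]
    exact hRHS
  have := (mul_le_mul_iff_right₀ hΓ).mp (by
    calc Real.Gamma α * (t ^ (-α) * (U ^ 2 / 2))
        = Real.Gamma α * t ^ (-α) * (U ^ 2 / 2) := by ring
      _ ≤ Real.Gamma α * ∫ s in (0:ℝ)..t, (∫ z in (0:ℝ)..s, (s - z) ^ (-α) * w z) * w s := main)
  calc t ^ (-α) * U ^ 2 / 2 = t ^ (-α) * (U ^ 2 / 2) := by ring
    _ ≤ _ := this

end FracCoercive

theorem fracInt_deriv_coercivity (T α : ℝ) (hT : 0 < T) (hα : 0 < α ∧ α < 1)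
    (u : ℝ → ℝ) (hu : ContDiffOn ℝ 1 u (Set.Icc 0 T)) (hu0 : u 0 = 0) :
    ∃ C > 0, ∀ t ∈ Set.Ioc (0:ℝ) T,
      C * t ^ (-α) * |u t| ^ 2 ≤
        ∫ s in (0:ℝ)..t, fracInt (1 - α) (deriv u) s * deriv u s := by
  obtain ⟨hα0, hα1⟩ := hα
  have hΓ : 0 < Real.Gamma (1 - α) := Real.Gamma_pos_of_pos (by linarith)
  set v : ℝ → ℝ := derivWithin u (Set.Icc 0 T) with hv
  have hvc : ContinuousOn v (Set.Icc 0 T) :=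
    hu.continuousOn_derivWithin (uniqueDiffOn_Icc hT) le_rfl
  set w : ℝ → ℝ := fun x => v (max 0 (min x T)) with hwdef
  have hproj : ∀ x : ℝ, max 0 (min x T) ∈ Set.Icc 0 T := by
    intro x
    constructor
    · exact le_max_left _ _
    · exact max_le hT.le (le_trans (min_le_right _ _) le_rfl)
  have hwc : Continuous w := hvc.comp_continuous (by fun_prop) hproj
  have hw_icc : ∀ x ∈ Set.Icc 0 T, w x = v x := by
    intro x hx
    rw [hwdef]
    simp only
    rw [min_eq_left hx.2, max_eq_right hx.1]
  have hw_deriv : ∀ x ∈ Set.Ioo 0 T, deriv u x = w x := by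
    intro x hx
    have hmem : Set.Icc 0 T ∈ nhds x := Icc_mem_nhds hx.1 hx.2
    rw [hw_icc x ⟨hx.1.le, hx.2.le⟩, hv, derivWithin_of_mem_nhds hmem]
  obtain ⟨M, hMb⟩ := isCompact_Icc.exists_bound_of_continuousOn hvc
  have hM : ∀ z, |w z| ≤ M := by
    intro z
    rw [hwdef]
    simpa [Real.norm_eq_abs] using hMb _ (hproj z)
  have hderivAt : ∀ x ∈ Set.Ioo 0 T, HasDerivAt u (w x) x := by
    intro x hx
    have hmem : Set.Icc 0 T ∈ nhds x := Icc_mem_nhds hx.1 hx.2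
    have hdiff := (hu.differentiableOn one_ne_zero) x ⟨hx.1.le, hx.2.le⟩
    have := (hdiff.differentiableAt hmem).hasDerivAt
    rwa [hw_deriv x hx] at this
  refine ⟨1 / (2 * Real.Gamma (1 - α)), by positivity, ?_⟩
  intro t ht
  -- FTC : u t = ∫ w on [0, t]
  have hut : u t = ∫ z in (0:ℝ)..t, w z := by
    have hcont : ContinuousOn u (Set.Icc 0 t) :=
      hu.continuousOn.mono (Set.Icc_subset_Icc le_rfl ht.2)
    have hderiv : ∀ x ∈ Set.Ioo 0 t, HasDerivAt u (w x) x := by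
      intro x hx
      exact hderivAt x ⟨hx.1, lt_of_lt_of_le hx.2 ht.2⟩
    have := intervalIntegral.integral_eq_sub_of_hasDerivAt_of_le ht.1.le hcont hderiv
      (hwc.intervalIntegrable _ _)
    rw [this, hu0, sub_zero]
  -- rewrite the RHS
  have hRHSeq : (∫ s in (0:ℝ)..t, fracInt (1 - α) (deriv u) s * deriv u s)
      = (1 / Real.Gamma (1 - α)) *
        ∫ s in (0:ℝ)..t, (∫ z in (0:ℝ)..s, (s - z) ^ (-α) * w z) * w s := by
    rw [intervalIntegral.integral_of_le ht.1.le, MeasureTheory.integral_Ioc_eq_integral_Ioo,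
      MeasureTheory.setIntegral_congr_fun (μ := MeasureTheory.volume) measurableSet_Ioo
        (g := fun s => (1 / Real.Gamma (1 - α)) *
          ((∫ z in (0:ℝ)..s, (s - z) ^ (-α) * w z) * w s)) ?_]
    · rw [MeasureTheory.integral_const_mul, intervalIntegral.integral_of_le ht.1.le,
        MeasureTheory.integral_Ioc_eq_integral_Ioo]
    · intro s hs
      simp only [Set.mem_Ioo] at hs
      have hsT : s ∈ Set.Ioo 0 T := ⟨hs.1, lt_of_lt_of_le hs.2 ht.2⟩
      have hds : deriv u s = w s := hw_deriv s hsT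
      have hinner : (∫ z in (0:ℝ)..s, (s - z) ^ ((1 - α) - 1) * deriv u z)
          = ∫ z in (0:ℝ)..s, (s - z) ^ (-α) * w z := by
        have hexp : (1:ℝ) - α - 1 = -α := by ring
        rw [hexp, intervalIntegral.integral_of_le hs.1.le,
          intervalIntegral.integral_of_le hs.1.le,
          MeasureTheory.integral_Ioc_eq_integral_Ioo,
          MeasureTheory.integral_Ioc_eq_integral_Ioo]
        apply MeasureTheory.setIntegral_congr_fun measurableSet_Ioo
        intro z hz
        simp only [Set.mem_Ioo] at hz
        have hzT : z ∈ Set.Ioo 0 T := ⟨hz.1, lt_trans hz.2 hsT.2⟩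
        show (s - z) ^ (-α) * deriv u z = (s - z) ^ (-α) * w z
        rw [hw_deriv z hzT]
      show fracInt (1 - α) (deriv u) s * deriv u s = _
      rw [fracInt, hds, hinner]
      ring
  rw [hRHSeq]
  have hcore := FracCoercive.core_bound hα0 hα1 hwc hM ht.1
  have habs : |u t| ^ 2 = (∫ z in (0:ℝ)..t, w z) ^ 2 := by rw [sq_abs, hut]
  rw [habs]
  calc 1 / (2 * Real.Gamma (1 - α)) * t ^ (-α) * (∫ z in (0:ℝ)..t, w z) ^ 2
      = (1 / Real.Gamma (1 - α)) * (t ^ (-α) * (∫ z in (0:ℝ)..t, w z) ^ 2 / 2) := by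
        rw [one_div, one_div, mul_inv]
        ring
    _ ≤ (1 / Real.Gamma (1 - α)) *
        ∫ s in (0:ℝ)..t, (∫ z in (0:ℝ)..s, (s - z) ^ (-α) * w z) * w s := by
        apply mul_le_mul_of_nonneg_left hcore (by positivity)
end

section
/- (Fractional Grönwall inequality with singular forcing.) Let 0 < α < 1, β ∈ [0,1), A ≥ 0, B > 0, T > 0, and let y : (0,T] → ℝ be continuous and nonnegative. If y(t) ≤ A t^{-β} + B (I^α y)(t) for all t ∈ (0,T], then there exists C = C(α, β, B, T) > 0 such that y(t) ≤ C A t^{-β} for all t ∈ (0,T]. -/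
open MeasureTheory intervalIntegral Real Set
open scoped ENNReal

/-- constant in the two-kernel estimate -/
noncomputable def Cs (μ ν : ℝ) : ℝ := max 1 (2^(-μ)) / (ν+1) + max 1 (2^(-ν)) / (μ+1)


lemma Cs_nonneg {μ ν : ℝ} (hμ : -1 < μ) (hν : -1 < ν) : 0 ≤ Cs μ ν := by
  have h1 : (0:ℝ) ≤ max 1 (2^(-μ)) := le_trans zero_le_one (le_max_left _ _)
  have h2 : (0:ℝ) ≤ max 1 (2^(-ν)) := le_trans zero_le_one (le_max_left _ _)
  have : (0:ℝ) < ν + 1 := by linarith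
  have : (0:ℝ) < μ + 1 := by linarith
  unfold Cs
  positivity


lemma lint_rpow {ν : ℝ} (hν : -1 < ν) {a b : ℝ} (hab : a ≤ b) :
    ∫⁻ s in Ioc a b, ENNReal.ofReal ((s - a) ^ ν) = ENNReal.ofReal ((b-a)^(ν+1)/(ν+1)) := by
  have hint : IntervalIntegrable (fun s => (s - a) ^ ν) volume a b := by
    have h0 := (intervalIntegrable_rpow' (a := 0) (b := b - a) hν).comp_sub_right a
    simpa using h0
  have hIC : IntegrableOn (fun s => (s - a) ^ ν) (Ioc a b) volume :=
    (intervalIntegrable_iff_integrableOn_Ioc_of_le hab).1 hint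
  have hval : ∫ s in Ioc a b, (s - a) ^ ν = (b-a)^(ν+1)/(ν+1) := by
    rw [← intervalIntegral.integral_of_le hab]
    rw [intervalIntegral.integral_comp_sub_right (fun x => x ^ ν) a]
    rw [integral_rpow (Or.inl hν)]
    simp [Real.zero_rpow (by linarith : ν + 1 ≠ 0)]
  rw [← hval]
  rw [← ofReal_integral_eq_lintegral_ofReal hIC]
  filter_upwards [ae_restrict_mem measurableSet_Ioc] with s hs
  exact Real.rpow_nonneg (by linarith [hs.1] : (0:ℝ) ≤ s - a) ν

lemma lint_rpow' {μ : ℝ} (hμ : -1 < μ) {a b : ℝ} (hab : a ≤ b) :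
    ∫⁻ s in Ioc a b, ENNReal.ofReal ((b - s) ^ μ) = ENNReal.ofReal ((b-a)^(μ+1)/(μ+1)) := by
  have hint : IntervalIntegrable (fun s => (b - s) ^ μ) volume a b := by
    have h0 := (intervalIntegrable_rpow' (a := b - b) (b := b - a) hμ).comp_sub_left b
    simpa using h0.symm
  have hIC : IntegrableOn (fun s => (b - s) ^ μ) (Ioc a b) volume :=
    (intervalIntegrable_iff_integrableOn_Ioc_of_le hab).1 hint
  have hval : ∫ s in Ioc a b, (b - s) ^ μ = (b-a)^(μ+1)/(μ+1) := by
    rw [← intervalIntegral.integral_of_le hab]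
    rw [intervalIntegral.integral_comp_sub_left (fun x => x ^ μ) b]
    rw [integral_rpow (Or.inl hμ)]
    simp [Real.zero_rpow (by linarith : μ + 1 ≠ 0)]
  rw [← hval]
  rw [← ofReal_integral_eq_lintegral_ofReal hIC]
  filter_upwards [ae_restrict_mem measurableSet_Ioc] with s hs
  exact Real.rpow_nonneg (by linarith [hs.2] : (0:ℝ) ≤ b - s) μ

lemma rpow_max_bound {x d e : ℝ} (hd : 0 < d) (hx1 : d/2 ≤ x) (hx2 : x ≤ d) :
    x ^ e ≤ max 1 (2^(-e)) * d ^ e := by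
  rcases le_or_gt 0 e with he | he
  · calc x ^ e ≤ d ^ e := Real.rpow_le_rpow (by linarith) hx2 he
      _ ≤ max 1 (2^(-e)) * d ^ e := by
        nlinarith [Real.rpow_nonneg hd.le e, le_max_left 1 (2^(-e):ℝ)]
  · have h1 : x ^ e ≤ (d/2) ^ e := Real.rpow_le_rpow_of_nonpos (by linarith) hx1 he.le
    have h2 : (d/2 : ℝ) ^ e = 2^(-e) * d ^ e := by
      rw [div_eq_mul_inv, Real.mul_rpow hd.le (by norm_num), Real.inv_rpow (by norm_num),
        ← Real.rpow_neg (by norm_num)]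
      ring
    calc x ^ e ≤ 2^(-e) * d^e := by rw [← h2]; exact h1
      _ ≤ max 1 (2^(-e)) * d ^ e := by
        have := Real.rpow_nonneg hd.le e
        nlinarith [le_max_right 1 (2^(-e):ℝ)]


lemma kernel_bound {μ ν : ℝ} (hμ : -1 < μ) (hν : -1 < ν) {r t : ℝ} (hrt : r < t) :
    ∫⁻ s in Ioc r t, ENNReal.ofReal ((t-s)^μ) * ENNReal.ofReal ((s-r)^ν)
      ≤ ENNReal.ofReal (Cs μ ν * (t-r)^(μ+ν+1)) := by
  set m := (r+t)/2 with hm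
  have hrm : r ≤ m := by rw [hm]; linarith
  have hmt : m ≤ t := by rw [hm]; linarith
  have hsplit : Ioc r t = Ioc r m ∪ Ioc m t := (Ioc_union_Ioc_eq_Ioc hrm hmt).symm
  have hd : (0:ℝ) < t - r := by linarith
  rw [hsplit, lintegral_union measurableSet_Ioc (Ioc_disjoint_Ioc_of_le le_rfl)]
  have hpiece1 : ∫⁻ s in Ioc r m, ENNReal.ofReal ((t-s)^μ) * ENNReal.ofReal ((s-r)^ν)
      ≤ ENNReal.ofReal (max 1 (2^(-μ)) * (t-r)^μ) * ENNReal.ofReal ((t-r)^(ν+1)/(ν+1)) := by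
    have hmono : ∫⁻ s in Ioc r m, ENNReal.ofReal ((t-s)^μ) * ENNReal.ofReal ((s-r)^ν)
        ≤ ∫⁻ s in Ioc r m, ENNReal.ofReal (max 1 (2^(-μ)) * (t-r)^μ) * ENNReal.ofReal ((s-r)^ν) := by
      apply setLIntegral_mono (by fun_prop)
      intro s hs
      apply mul_le_mul_left
      apply ENNReal.ofReal_le_ofReal
      exact rpow_max_bound hd (by obtain ⟨h1, h2⟩ := hs; rw [hm] at h2; linarith)
        (by linarith [hs.1])
    refine hmono.trans ?_
    rw [lintegral_const_mul' _ _ ENNReal.ofReal_ne_top]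
    apply mul_le_mul_right
    calc ∫⁻ s in Ioc r m, ENNReal.ofReal ((s-r)^ν) ≤ ∫⁻ s in Ioc r t, ENNReal.ofReal ((s-r)^ν) :=
          lintegral_mono_set (Set.Ioc_subset_Ioc_right hmt)
      _ = ENNReal.ofReal ((t-r)^(ν+1)/(ν+1)) := lint_rpow hν hrt.le
  have hpiece2 : ∫⁻ s in Ioc m t, ENNReal.ofReal ((t-s)^μ) * ENNReal.ofReal ((s-r)^ν)
      ≤ ENNReal.ofReal (max 1 (2^(-ν)) * (t-r)^ν) * ENNReal.ofReal ((t-r)^(μ+1)/(μ+1)) := by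
    have hmono : ∫⁻ s in Ioc m t, ENNReal.ofReal ((t-s)^μ) * ENNReal.ofReal ((s-r)^ν)
        ≤ ∫⁻ s in Ioc m t, ENNReal.ofReal (max 1 (2^(-ν)) * (t-r)^ν) * ENNReal.ofReal ((t-s)^μ) := by
      apply setLIntegral_mono (by fun_prop)
      intro s hs
      rw [mul_comm (ENNReal.ofReal ((t-s)^μ))]
      apply mul_le_mul_left
      apply ENNReal.ofReal_le_ofReal
      exact rpow_max_bound hd (by obtain ⟨h1, h2⟩ := hs; rw [hm] at h1; linarith)
        (by linarith [hs.2])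
    refine hmono.trans ?_
    rw [lintegral_const_mul' _ _ ENNReal.ofReal_ne_top]
    apply mul_le_mul_right
    calc ∫⁻ s in Ioc m t, ENNReal.ofReal ((t-s)^μ) ≤ ∫⁻ s in Ioc r t, ENNReal.ofReal ((t-s)^μ) :=
          lintegral_mono_set (Set.Ioc_subset_Ioc_left hrm)
      _ = ENNReal.ofReal ((t-r)^(μ+1)/(μ+1)) := lint_rpow' hμ hrt.le
  refine (add_le_add hpiece1 hpiece2).trans ?_
  have hm1 : (0:ℝ) ≤ max 1 (2^(-μ)) * (t-r)^μ :=
    mul_nonneg (le_trans zero_le_one (le_max_left _ _)) (Real.rpow_nonneg hd.le _)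
  have hm2 : (0:ℝ) ≤ max 1 (2^(-ν)) * (t-r)^ν :=
    mul_nonneg (le_trans zero_le_one (le_max_left _ _)) (Real.rpow_nonneg hd.le _)
  rw [← ENNReal.ofReal_mul hm1, ← ENNReal.ofReal_mul hm2,
    ← ENNReal.ofReal_add
      (mul_nonneg hm1 (div_nonneg (Real.rpow_nonneg hd.le _) (by linarith)))
      (mul_nonneg hm2 (div_nonneg (Real.rpow_nonneg hd.le _) (by linarith)))]
  apply ENNReal.ofReal_le_ofReal
  have e1 : (t-r)^μ * (t-r)^(ν+1) = (t-r)^(μ+ν+1) := by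
    rw [← Real.rpow_add hd]; ring_nf
  have e2 : (t-r)^ν * (t-r)^(μ+1) = (t-r)^(μ+ν+1) := by
    rw [← Real.rpow_add hd]; ring_nf
  apply le_of_eq
  rw [show max 1 (2^(-μ)) * (t-r)^μ * ((t-r)^(ν+1)/(ν+1))
      = (max 1 (2^(-μ))/(ν+1)) * ((t-r)^μ * (t-r)^(ν+1)) by ring,
    show max 1 (2^(-ν)) * (t-r)^ν * ((t-r)^(μ+1)/(μ+1))
      = (max 1 (2^(-ν))/(μ+1)) * ((t-r)^ν * (t-r)^(μ+1)) by ring, e1, e2]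
  unfold Cs
  ring

lemma swap_lemma {G : ℝ → ℝ≥0∞} (hG : Measurable G) (μ ν : ℝ) (a t : ℝ) :
    ∫⁻ s in Ioc a t, ENNReal.ofReal ((t-s)^μ) * ∫⁻ r in Ioc a s, ENNReal.ofReal ((s-r)^ν) * G r
      = ∫⁻ r in Ioc a t,
          (∫⁻ s in Ioc r t, ENNReal.ofReal ((t-s)^μ) * ENNReal.ofReal ((s-r)^ν)) * G r := by
  set S : Set (ℝ×ℝ) := {p | a < p.1 ∧ p.1 ≤ t ∧ a < p.2 ∧ p.2 ≤ p.1} with hS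
  have hSm : MeasurableSet S := by
    apply MeasurableSet.inter (measurableSet_lt measurable_const measurable_fst)
    apply MeasurableSet.inter (measurableSet_le measurable_fst measurable_const)
    exact MeasurableSet.inter (measurableSet_lt measurable_const measurable_snd)
      (measurableSet_le measurable_snd measurable_fst)
  set F2 : ℝ×ℝ → ℝ≥0∞ :=
    S.indicator (fun p => ENNReal.ofReal ((t-p.1)^μ) * (ENNReal.ofReal ((p.1-p.2)^ν) * G p.2))
    with hF2
  have hF2m : Measurable F2 := by
    apply Measurable.indicator _ hSm
    fun_prop
  have hL : ∀ s, (Ioc a t).indicator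
      (fun s => ENNReal.ofReal ((t-s)^μ) * ∫⁻ r in Ioc a s, ENNReal.ofReal ((s-r)^ν) * G r) s
      = ∫⁻ r, F2 (s,r) := by
    intro s
    by_cases hs : s ∈ Ioc a t
    · rw [indicator_of_mem hs]
      have hptw : ∀ r, F2 (s,r)
          = (Ioc a s).indicator
            (fun r => ENNReal.ofReal ((t-s)^μ) * (ENNReal.ofReal ((s-r)^ν) * G r)) r := by
        intro r
        by_cases hr : r ∈ Ioc a s
        · rw [indicator_of_mem hr, hF2, indicator_of_mem]
          exact ⟨hs.1, hs.2, hr.1, hr.2⟩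
        · rw [indicator_of_notMem hr, hF2, indicator_of_notMem]
          intro hmem
          exact hr ⟨hmem.2.2.1, hmem.2.2.2⟩
      rw [lintegral_congr hptw, lintegral_indicator measurableSet_Ioc,
        lintegral_const_mul' _ _ ENNReal.ofReal_ne_top]
    · rw [indicator_of_notMem hs]
      have hptw : ∀ r, F2 (s,r) = 0 := by
        intro r
        rw [hF2, indicator_of_notMem]
        intro hmem
        exact hs ⟨hmem.1, hmem.2.1⟩
      rw [lintegral_congr hptw, lintegral_zero]
  have hR : ∀ r, (Ioc a t).indicator
      (fun r => (∫⁻ s in Ioc r t, ENNReal.ofReal ((t-s)^μ) * ENNReal.ofReal ((s-r)^ν)) * G r) r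
      = ∫⁻ s, F2 (s,r) := by
    intro r
    by_cases hr : r ∈ Ioc a t
    · rw [indicator_of_mem hr]
      have hptw : ∀ s, F2 (s,r)
          = (Icc r t).indicator
            (fun s => (ENNReal.ofReal ((t-s)^μ) * ENNReal.ofReal ((s-r)^ν)) * G r) s := by
        intro s
        by_cases hsm : s ∈ Icc r t
        · rw [indicator_of_mem hsm, hF2, indicator_of_mem, mul_assoc]
          exact ⟨lt_of_lt_of_le hr.1 hsm.1, hsm.2, hr.1, hsm.1⟩
        · rw [indicator_of_notMem hsm, hF2, indicator_of_notMem]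
          intro hmem
          exact hsm ⟨hmem.2.2.2, hmem.2.1⟩
      rw [lintegral_congr hptw, lintegral_indicator measurableSet_Icc,
        ← Measure.restrict_congr_set Ioc_ae_eq_Icc,
        lintegral_mul_const _ (by fun_prop)]
    · rw [indicator_of_notMem hr]
      have hptw : ∀ s, F2 (s,r) = 0 := by
        intro s
        rw [hF2, indicator_of_notMem]
        intro hmem
        exact hr ⟨hmem.2.2.1, hmem.2.2.2.trans hmem.2.1⟩
      rw [lintegral_congr hptw, lintegral_zero]
  calc ∫⁻ s in Ioc a t, ENNReal.ofReal ((t-s)^μ) * ∫⁻ r in Ioc a s, ENNReal.ofReal ((s-r)^ν) * G r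
      = ∫⁻ s, (Ioc a t).indicator
          (fun s => ENNReal.ofReal ((t-s)^μ) * ∫⁻ r in Ioc a s, ENNReal.ofReal ((s-r)^ν) * G r) s :=
        (lintegral_indicator measurableSet_Ioc _).symm
    _ = ∫⁻ s, ∫⁻ r, F2 (s,r) := lintegral_congr hL
    _ = ∫⁻ r, ∫⁻ s, F2 (s,r) := by
        apply lintegral_lintegral_swap
        exact (hF2m.comp (measurable_fst.prodMk measurable_snd)).aemeasurable
    _ = ∫⁻ r, (Ioc a t).indicator
          (fun r => (∫⁻ s in Ioc r t, ENNReal.ofReal ((t-s)^μ) * ENNReal.ofReal ((s-r)^ν)) * G r) r :=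
        (lintegral_congr hR).symm
    _ = _ := lintegral_indicator measurableSet_Ioc _

set_option maxHeartbeats 2000000 in
theorem fractional_gronwall (T α β A B : ℝ) (hT : 0 < T)
    (hα : 0 < α ∧ α < 1) (hβ : 0 ≤ β ∧ β < 1) (hA : 0 ≤ A) (hB : 0 < B)
    (y : ℝ → ℝ) (hy : ContinuousOn y (Set.Ioc 0 T))
    (hpos : ∀ t ∈ Set.Ioc (0:ℝ) T, 0 ≤ y t)
    (h : ∀ t ∈ Set.Ioc (0:ℝ) T, y t ≤ A * t ^ (-β) + B * fracInt α y t) :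
    ∃ C > 0, ∀ t ∈ Set.Ioc (0:ℝ) T, y t ≤ C * A * t ^ (-β) := by
  obtain ⟨hα0, hα1⟩ := hα
  obtain ⟨hβ0, hβ1⟩ := hβ
  have hΓ : 0 < Real.Gamma α := Real.Gamma_pos_of_pos hα0
  by_cases hcase : ∃ ε, 0 < ε ∧ ε ≤ T ∧ IntegrableOn y (Ioc 0 ε) volume
  case neg =>
    -- non-integrable near 0: the fractional integral is junk 0, so y t ≤ A t^{-β}
    push_neg at hcase
    refine ⟨1, one_pos, fun t ht => ?_⟩
    have hnint : ¬ IntervalIntegrable (fun s => (t - s)^(α-1) * y s) volume 0 t := by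
      intro hint
      apply hcase (t/2) (by linarith [ht.1]) (by linarith [ht.1, ht.2])
      have hIC : IntegrableOn (fun s => (t-s)^(α-1) * y s) (Ioc 0 t) volume :=
        (intervalIntegrable_iff_integrableOn_Ioc_of_le ht.1.le).1 hint
      have hIC2 := hIC.mono_set (Ioc_subset_Ioc_right (by linarith [ht.1] : t/2 ≤ t))
      apply Integrable.mono' (hIC2.const_mul (t^(1-α)))
      · exact ((hy.mono (Ioc_subset_Ioc_right (by linarith [ht.1, ht.2]))).aemeasurable
          measurableSet_Ioc).aestronglyMeasurable
      · filter_upwards [ae_restrict_mem measurableSet_Ioc] with s hs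
        have hys : 0 ≤ y s := hpos s ⟨hs.1, by linarith [hs.2, ht.1, ht.2]⟩
        have hts : 0 < t - s := by linarith [hs.2, ht.1]
        have k1 : t^(α-1) ≤ (t-s)^(α-1) :=
          Real.rpow_le_rpow_of_nonpos hts (by linarith [hs.1]) (by linarith)
        rw [Real.norm_of_nonneg hys]
        calc y s = (t^(1-α) * t^(α-1)) * y s := by
              rw [← Real.rpow_add ht.1]; norm_num
          _ ≤ t^(1-α) * ((t-s)^(α-1) * y s) := by
              rw [mul_assoc]
              exact mul_le_mul_of_nonneg_left (mul_le_mul_of_nonneg_right k1 hys)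
                (Real.rpow_nonneg ht.1.le _)
    have h1 := h t ht
    rw [fracInt, intervalIntegral.integral_undef hnint, mul_zero, mul_zero, add_zero] at h1
    simpa using h1
  case pos =>
    obtain ⟨ε, hε0, hεT, hεint⟩ := hcase
    -- global integrability on (0, T]
    have hL1 : IntegrableOn y (Ioc 0 T) volume := by
      have h2 : IntegrableOn y (Ioc ε T) volume := by
        have hc : ContinuousOn y (Icc ε T) :=
          hy.mono (fun x hx => ⟨lt_of_lt_of_le hε0 hx.1, hx.2⟩)
        exact hc.integrableOn_Icc.mono_set Ioc_subset_Icc_self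
      have h3 := hεint.union h2
      rwa [Ioc_union_Ioc_eq_Ioc hε0.le hεT] at h3
    -- measurable modification
    have hym : AEMeasurable y (volume.restrict (Ioc 0 T)) := hy.aemeasurable measurableSet_Ioc
    obtain ⟨g, hgm, hyg⟩ := hym
    set G : ℝ → ℝ≥0∞ := fun s => ENNReal.ofReal (g s) with hGdef
    have hGm : Measurable G := by fun_prop
    have hGae : ∀ t', t' ≤ T →
        (fun s => ENNReal.ofReal (y s)) =ᵐ[volume.restrict (Ioc 0 t')] G := by
      intro t' ht'
      apply ae_restrict_of_ae_restrict_of_subset (Ioc_subset_Ioc_right ht')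
      filter_upwards [hyg] with s hs
      rw [hGdef, hs]
    -- integrability of the kernel * y
    have hII : ∀ t ∈ Ioc (0:ℝ) T,
        IntegrableOn (fun s => (t - s)^(α-1) * y s) (Ioc 0 t) volume := by
      intro t ht
      have ht2 : (0:ℝ) < t/2 := by linarith [ht.1]
      have hsplit : Ioc (0:ℝ) t = Ioc 0 (t/2) ∪ Ioc (t/2) t :=
        (Ioc_union_Ioc_eq_Ioc (by linarith) (by linarith [ht.1])).symm
      rw [hsplit]
      apply IntegrableOn.union
      · apply Integrable.mono'
          ((hL1.mono_set (Ioc_subset_Ioc_right (by linarith [ht.2]))).const_mul ((t/2)^(α-1)))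
        · have hmk : Measurable (fun s : ℝ => (t - s)^(α-1)) := by fun_prop
          exact (hmk.aemeasurable.mul
            ((hy.mono (Ioc_subset_Ioc_right (by linarith [ht.2]))).aemeasurable
              measurableSet_Ioc)).aestronglyMeasurable
        · filter_upwards [ae_restrict_mem measurableSet_Ioc] with s hs
          have hys : 0 ≤ y s := hpos s ⟨hs.1, by linarith [hs.2, ht.2]⟩
          have hts : 0 < t - s := by linarith [hs.2]
          have k1 : (t-s)^(α-1) ≤ (t/2)^(α-1) :=
            Real.rpow_le_rpow_of_nonpos ht2 (by linarith [hs.2]) (by linarith)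
          rw [Real.norm_of_nonneg (mul_nonneg (Real.rpow_nonneg hts.le _) hys)]
          exact mul_le_mul_of_nonneg_right k1 hys
      · have hcont : ContinuousOn y (Icc (t/2) t) :=
          hy.mono (fun x hx => ⟨lt_of_lt_of_le ht2 hx.1, le_trans hx.2 ht.2⟩)
        obtain ⟨x₀, hx₀mem, hx₀max⟩ :=
          (isCompact_Icc).exists_isMaxOn (nonempty_Icc.2 (by linarith [ht.1])) hcont
        have hker : IntegrableOn (fun s => (t-s)^(α-1)) (Ioc (t/2) t) volume := by
          have h0 := (intervalIntegrable_rpow' (a := 0) (b := t/2)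
            (by linarith : (-1:ℝ) < α - 1)).comp_sub_left t
          simp only [sub_zero] at h0
          rw [show t - t/2 = t/2 by ring] at h0
          exact (intervalIntegrable_iff_integrableOn_Ioc_of_le (by linarith)).1 h0.symm
        apply Integrable.mono' (hker.const_mul (y x₀))
        · have hmk : Measurable (fun s : ℝ => (t - s)^(α-1)) := by fun_prop
          exact (hmk.aemeasurable.mul
            ((hy.mono (fun x hx => ⟨lt_of_lt_of_le ht2 hx.1.le |>.trans_le le_rfl, le_trans hx.2 ht.2⟩)).aemeasurable
              measurableSet_Ioc)).aestronglyMeasurable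
        · filter_upwards [ae_restrict_mem measurableSet_Ioc] with s hs
          have hys : 0 ≤ y s := hpos s ⟨lt_trans ht2 hs.1, le_trans hs.2 ht.2⟩
          have hts : 0 ≤ t - s := by linarith [hs.2]
          have k2 : y s ≤ y x₀ := hx₀max ⟨hs.1.le, hs.2⟩
          rw [Real.norm_of_nonneg (mul_nonneg (Real.rpow_nonneg hts _) hys)]
          calc (t-s)^(α-1) * y s ≤ (t-s)^(α-1) * y x₀ :=
                mul_le_mul_of_nonneg_left k2 (Real.rpow_nonneg hts _)
            _ = y x₀ * (t-s)^(α-1) := mul_comm _ _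
    -- ENNReal form of the hypothesis
    have hGineq : ∀ t ∈ Ioc (0:ℝ) T, ENNReal.ofReal (y t)
        ≤ ENNReal.ofReal (A * t^(-β)) + ENNReal.ofReal (B / Real.Gamma α) *
            ∫⁻ s in Ioc 0 t, ENNReal.ofReal ((t-s)^(α-1)) * G s := by
      intro t ht
      have hval : ∫ s in (0:ℝ)..t, (t-s)^(α-1) * y s = ∫ s in Ioc 0 t, (t-s)^(α-1) * y s :=
        intervalIntegral.integral_of_le ht.1.le
      have hnn : (0:ℝ) ≤ ∫ s in Ioc 0 t, (t-s)^(α-1) * y s :=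
        setIntegral_nonneg measurableSet_Ioc (fun s hs =>
          mul_nonneg (Real.rpow_nonneg (by linarith [hs.2]) _) (hpos s ⟨hs.1, le_trans hs.2 ht.2⟩))
      have h1 := h t ht
      rw [fracInt, hval] at h1
      have hBγ : (0:ℝ) ≤ B / Real.Gamma α := le_of_lt (div_pos hB hΓ)
      have hAterm : (0:ℝ) ≤ A * t^(-β) := mul_nonneg hA (Real.rpow_nonneg ht.1.le _)
      have key : ENNReal.ofReal (B / Real.Gamma α * ∫ s in Ioc 0 t, (t-s)^(α-1) * y s)
          = ENNReal.ofReal (B / Real.Gamma α) *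
            ∫⁻ s in Ioc 0 t, ENNReal.ofReal ((t-s)^(α-1)) * G s := by
        rw [ENNReal.ofReal_mul hBγ]
        congr 1
        rw [ofReal_integral_eq_lintegral_ofReal (hII t ht)
          (by filter_upwards [ae_restrict_mem measurableSet_Ioc] with s hs
              exact mul_nonneg (Real.rpow_nonneg (by linarith [hs.2]) _)
                (hpos s ⟨hs.1, le_trans hs.2 ht.2⟩))]
        apply lintegral_congr_ae
        filter_upwards [ae_restrict_mem measurableSet_Ioc, hGae t ht.2] with s hs hGs
        rw [ENNReal.ofReal_mul (Real.rpow_nonneg (by linarith [hs.2]) _), hGs]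
      calc ENNReal.ofReal (y t)
          ≤ ENNReal.ofReal (A * t^(-β) + B / Real.Gamma α * ∫ s in Ioc 0 t, (t-s)^(α-1) * y s) := by
            apply ENNReal.ofReal_le_ofReal
            calc y t ≤ A * t^(-β) + B * (1 / Real.Gamma α * ∫ s in Ioc 0 t, (t-s)^(α-1) * y s) := h1
              _ = A * t^(-β) + B / Real.Gamma α * ∫ s in Ioc 0 t, (t-s)^(α-1) * y s := by ring
        _ = ENNReal.ofReal (A * t^(-β))
            + ENNReal.ofReal (B / Real.Gamma α * ∫ s in Ioc 0 t, (t-s)^(α-1) * y s) :=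
            ENNReal.ofReal_add hAterm (mul_nonneg hBγ hnn)
        _ = _ := by rw [key]
    have hβ' : (-1:ℝ) < -β := by linarith
    -- iterated kernel claim
    have claim : ∀ k : ℕ, ∃ a c : ℝ, 0 ≤ a ∧ 0 ≤ c ∧ ∀ t ∈ Ioc (0:ℝ) T,
        ENNReal.ofReal (y t) ≤ ENNReal.ofReal (A * a * t^(-β))
          + ENNReal.ofReal c *
              ∫⁻ s in Ioc 0 t, ENNReal.ofReal ((t-s)^(((k:ℝ)+1)*α - 1)) * G s := by
      intro k
      induction k with
      | zero =>
        refine ⟨1, B / Real.Gamma α, zero_le_one, le_of_lt (div_pos hB hΓ), fun t ht => ?_⟩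
        have h1 := hGineq t ht
        rw [show (((0:ℕ):ℝ)+1)*α - 1 = α - 1 by push_cast; ring,
          show A * 1 * t^(-β) = A * t^(-β) by ring]
        exact h1
      | succ k ih =>
        obtain ⟨a, c, ha, hc, hik⟩ := ih
        set κ : ℝ := ((k:ℝ)+1)*α - 1 with hκ
        have hκ1 : (-1:ℝ) < κ := by
          have h0 : (0:ℝ) < ((k:ℝ)+1)*α := by positivity
          rw [hκ]; linarith
        have hκα : κ + (α-1) + 1 = (((k+1:ℕ):ℝ)+1)*α - 1 := by push_cast; rw [hκ]; ring
        have hκβ : κ + (-β) + 1 = ((k:ℝ)+1)*α - β := by rw [hκ]; ring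
        have hcs1 : 0 ≤ Cs κ (-β) := Cs_nonneg hκ1 hβ'
        have hcs2 : 0 ≤ Cs κ (α-1) := Cs_nonneg hκ1 (by linarith)
        have hBγ : (0:ℝ) ≤ B / Real.Gamma α := le_of_lt (div_pos hB hΓ)
        refine ⟨a + c * (Cs κ (-β) * T^(((k:ℝ)+1)*α)),
          c * (B/Real.Gamma α * Cs κ (α-1)), ?_, ?_, fun t ht => ?_⟩
        · have h2 : (0:ℝ) ≤ T^(((k:ℝ)+1)*α) := Real.rpow_nonneg hT.le _
          positivity
        · positivity
        · have ht0 : (0:ℝ) < t := ht.1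
          have hGae' := (ae_restrict_iff' measurableSet_Ioc).1 (hGae t ht.2)
          have hmono : ∫⁻ s in Ioc 0 t, ENNReal.ofReal ((t-s)^κ) * G s
              ≤ ∫⁻ s in Ioc 0 t, ENNReal.ofReal ((t-s)^κ) *
                  (ENNReal.ofReal (A * s^(-β)) + ENNReal.ofReal (B/Real.Gamma α) *
                    ∫⁻ r in Ioc 0 s, ENNReal.ofReal ((s-r)^(α-1)) * G r) := by
            apply lintegral_mono_ae
            rw [ae_restrict_iff' measurableSet_Ioc]
            filter_upwards [hGae'] with s hGs hs
            apply mul_le_mul_right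
            rw [← hGs hs]
            exact hGineq s ⟨hs.1, hs.2.trans ht.2⟩
          have hsplit2 : ∫⁻ s in Ioc 0 t, ENNReal.ofReal ((t-s)^κ) *
                  (ENNReal.ofReal (A * s^(-β)) + ENNReal.ofReal (B/Real.Gamma α) *
                    ∫⁻ r in Ioc 0 s, ENNReal.ofReal ((s-r)^(α-1)) * G r)
              = (∫⁻ s in Ioc 0 t, ENNReal.ofReal ((t-s)^κ) * ENNReal.ofReal (A * s^(-β)))
                + ∫⁻ s in Ioc 0 t, ENNReal.ofReal ((t-s)^κ) *
                    (ENNReal.ofReal (B/Real.Gamma α) *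
                      ∫⁻ r in Ioc 0 s, ENNReal.ofReal ((s-r)^(α-1)) * G r) := by
            simp_rw [mul_add]
            exact lintegral_add_left (by fun_prop) _
          have hterm1 : (∫⁻ s in Ioc 0 t, ENNReal.ofReal ((t-s)^κ) * ENNReal.ofReal (A * s^(-β)))
              ≤ ENNReal.ofReal (A * (Cs κ (-β) * T^(((k:ℝ)+1)*α)) * t^(-β)) := by
            have e1 : ∀ s : ℝ, ENNReal.ofReal ((t-s)^κ) * ENNReal.ofReal (A * s^(-β))
                = ENNReal.ofReal A * (ENNReal.ofReal ((t-s)^κ) * ENNReal.ofReal (s^(-β))) := by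
              intro s; rw [ENNReal.ofReal_mul hA]; ring
            simp_rw [e1]
            rw [lintegral_const_mul' _ _ ENNReal.ofReal_ne_top]
            have e2 : ∫⁻ s in Ioc 0 t, ENNReal.ofReal ((t-s)^κ) * ENNReal.ofReal (s^(-β))
                ≤ ENNReal.ofReal (Cs κ (-β) * t^(κ + (-β) + 1)) := by
              have h3 := kernel_bound hκ1 hβ' ht0
              simpa [sub_zero] using h3
            calc ENNReal.ofReal A * ∫⁻ s in Ioc 0 t,
                  ENNReal.ofReal ((t-s)^κ) * ENNReal.ofReal (s^(-β))
                ≤ ENNReal.ofReal A * ENNReal.ofReal (Cs κ (-β) * t^(κ + (-β) + 1)) :=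
                  mul_le_mul_right e2 _
              _ = ENNReal.ofReal (A * (Cs κ (-β) * t^(((k:ℝ)+1)*α - β))) := by
                  rw [← ENNReal.ofReal_mul hA, hκβ]
              _ ≤ ENNReal.ofReal (A * (Cs κ (-β) * T^(((k:ℝ)+1)*α)) * t^(-β)) := by
                  apply ENNReal.ofReal_le_ofReal
                  have e3 : t^(((k:ℝ)+1)*α - β) = t^(((k:ℝ)+1)*α) * t^(-β) := by
                    rw [← Real.rpow_add ht0]; ring_nf
                  have e4 : t^(((k:ℝ)+1)*α) ≤ T^(((k:ℝ)+1)*α) :=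
                    Real.rpow_le_rpow ht0.le ht.2 (by positivity)
                  rw [e3]
                  calc A * (Cs κ (-β) * (t^(((k:ℝ)+1)*α) * t^(-β)))
                      ≤ A * (Cs κ (-β) * (T^(((k:ℝ)+1)*α) * t^(-β))) := by
                        apply mul_le_mul_of_nonneg_left _ hA
                        apply mul_le_mul_of_nonneg_left _ hcs1
                        exact mul_le_mul_of_nonneg_right e4 (Real.rpow_nonneg ht0.le _)
                    _ = A * (Cs κ (-β) * T^(((k:ℝ)+1)*α)) * t^(-β) := by ring
          have hterm2 : ∫⁻ s in Ioc 0 t, ENNReal.ofReal ((t-s)^κ) *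
                    (ENNReal.ofReal (B/Real.Gamma α) *
                      ∫⁻ r in Ioc 0 s, ENNReal.ofReal ((s-r)^(α-1)) * G r)
              ≤ ENNReal.ofReal (B/Real.Gamma α * Cs κ (α-1)) *
                  ∫⁻ s in Ioc 0 t, ENNReal.ofReal ((t-s)^((((k+1:ℕ):ℝ)+1)*α - 1)) * G s := by
            have e1 : ∀ s : ℝ, ENNReal.ofReal ((t-s)^κ) *
                  (ENNReal.ofReal (B/Real.Gamma α) *
                    ∫⁻ r in Ioc 0 s, ENNReal.ofReal ((s-r)^(α-1)) * G r)
                = ENNReal.ofReal (B/Real.Gamma α) * (ENNReal.ofReal ((t-s)^κ) *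
                    ∫⁻ r in Ioc 0 s, ENNReal.ofReal ((s-r)^(α-1)) * G r) := by
              intro s; ring
            simp_rw [e1]
            rw [lintegral_const_mul' _ _ ENNReal.ofReal_ne_top]
            rw [swap_lemma hGm κ (α-1) 0 t]
            have hptw : ∀ r ∈ Ioc (0:ℝ) t,
                (∫⁻ s in Ioc r t, ENNReal.ofReal ((t-s)^κ) * ENNReal.ofReal ((s-r)^(α-1))) * G r
                ≤ (ENNReal.ofReal (Cs κ (α-1)) *
                    ENNReal.ofReal ((t-r)^((((k+1:ℕ):ℝ)+1)*α - 1))) * G r := by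
              intro r hr
              apply mul_le_mul_left
              rcases eq_or_lt_of_le hr.2 with heq | hlt
              · rw [heq]
                simp [Set.Ioc_self]
              · have h4 := kernel_bound hκ1 (by linarith : (-1:ℝ) < α - 1) hlt
                rw [hκα] at h4
                refine h4.trans (le_of_eq ?_)
                exact ENNReal.ofReal_mul hcs2
            calc ENNReal.ofReal (B/Real.Gamma α) * ∫⁻ r in Ioc 0 t,
                  (∫⁻ s in Ioc r t, ENNReal.ofReal ((t-s)^κ) * ENNReal.ofReal ((s-r)^(α-1))) * G r
                ≤ ENNReal.ofReal (B/Real.Gamma α) * ∫⁻ r in Ioc 0 t,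
                    (ENNReal.ofReal (Cs κ (α-1)) *
                      ENNReal.ofReal ((t-r)^((((k+1:ℕ):ℝ)+1)*α - 1))) * G r :=
                  mul_le_mul_right (setLIntegral_mono (by fun_prop) hptw) _
              _ = ENNReal.ofReal (B/Real.Gamma α * Cs κ (α-1)) *
                  ∫⁻ s in Ioc 0 t, ENNReal.ofReal ((t-s)^((((k+1:ℕ):ℝ)+1)*α - 1)) * G s := by
                  simp_rw [mul_assoc]
                  rw [lintegral_const_mul' _ _ ENNReal.ofReal_ne_top,
                    ENNReal.ofReal_mul hBγ, mul_assoc]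
          have hIk : ∫⁻ s in Ioc 0 t, ENNReal.ofReal ((t-s)^κ) * G s
              ≤ ENNReal.ofReal (A * (Cs κ (-β) * T^(((k:ℝ)+1)*α)) * t^(-β))
                + ENNReal.ofReal (B/Real.Gamma α * Cs κ (α-1)) *
                    ∫⁻ s in Ioc 0 t, ENNReal.ofReal ((t-s)^((((k+1:ℕ):ℝ)+1)*α - 1)) * G s := by
            refine hmono.trans ?_
            rw [hsplit2]
            exact add_le_add hterm1 hterm2
          refine (hik t ht).trans ?_
          refine (add_le_add_right (mul_le_mul_right hIk _) _).trans ?_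
          have hnn1 : (0:ℝ) ≤ A * a * t^(-β) :=
            mul_nonneg (mul_nonneg hA ha) (Real.rpow_nonneg ht.1.le _)
          have hnn2 : (0:ℝ) ≤ c * (A * (Cs κ (-β) * T^(((k:ℝ)+1)*α)) * t^(-β)) :=
            mul_nonneg hc (mul_nonneg (mul_nonneg hA
              (mul_nonneg hcs1 (Real.rpow_nonneg hT.le _))) (Real.rpow_nonneg ht.1.le _))
          have hfold : ENNReal.ofReal c * (ENNReal.ofReal (B / Real.Gamma α * Cs κ (α-1)) *
                ∫⁻ s in Ioc 0 t, ENNReal.ofReal ((t-s)^((((k+1:ℕ):ℝ)+1)*α - 1)) * G s)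
              = ENNReal.ofReal (c * (B/Real.Gamma α * Cs κ (α-1))) *
                ∫⁻ s in Ioc 0 t, ENNReal.ofReal ((t-s)^((((k+1:ℕ):ℝ)+1)*α - 1)) * G s := by
            rw [← mul_assoc, ← ENNReal.ofReal_mul hc]
          rw [mul_add, hfold, ← ENNReal.ofReal_mul hc, ← add_assoc,
            ← ENNReal.ofReal_add hnn1 hnn2]
          apply add_le_add_left
          apply ENNReal.ofReal_le_ofReal
          apply le_of_eq
          ring
    have hBγ : (0:ℝ) ≤ B / Real.Gamma α := le_of_lt (div_pos hB hΓ)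
    -- finiteness of total mass
    have hVfin : ∫⁻ s in Ioc (0:ℝ) T, G s < ⊤ := by
      have h1 : ∫⁻ s in Ioc (0:ℝ) T, ENNReal.ofReal (y s) < ⊤ := hL1.lintegral_lt_top
      rwa [lintegral_congr_ae (hGae T le_rfl)] at h1
    -- one-window smallness
    have stepA : ∀ τ t', 0 ≤ τ → τ < t' → t' ≤ T →
        (∀ᵐ s ∂(volume.restrict (Ioc (0:ℝ) τ)), G s = 0) →
        ∫⁻ s in Ioc τ t', G s ≤ ENNReal.ofReal (A * t'^(1-β) / (1-β))
          + ENNReal.ofReal (B / Real.Gamma α * ((t'-τ)^α / α)) * ∫⁻ s in Ioc τ t', G s := by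
      intro τ t' hτ0 hτt' ht'T hG0
      have hbd : ∀ᵐ s ∂volume, s ∈ Ioc τ t' → G s ≤ ENNReal.ofReal (A * s^(-β))
          + ENNReal.ofReal (B/Real.Gamma α) *
              ∫⁻ r in Ioc τ s, ENNReal.ofReal ((s-r)^(α-1)) * G r := by
        have hGae' := (ae_restrict_iff' measurableSet_Ioc).1 (hGae t' ht'T)
        filter_upwards [hGae'] with s hGs hs
        have hsT : s ∈ Ioc (0:ℝ) T := ⟨lt_of_le_of_lt hτ0 hs.1, hs.2.trans ht'T⟩
        have h1 := hGineq s hsT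
        rw [hGs ⟨lt_of_le_of_lt hτ0 hs.1, hs.2⟩] at h1
        have hsplit3 : Ioc (0:ℝ) s = Ioc 0 τ ∪ Ioc τ s :=
          (Ioc_union_Ioc_eq_Ioc hτ0 (le_of_lt hs.1)).symm
        rw [hsplit3, lintegral_union measurableSet_Ioc (Ioc_disjoint_Ioc_of_le le_rfl)] at h1
        have hzero : ∫⁻ r in Ioc (0:ℝ) τ, ENNReal.ofReal ((s-r)^(α-1)) * G r = 0 := by
          have h2 : ∀ᵐ r ∂(volume.restrict (Ioc (0:ℝ) τ)),
              ENNReal.ofReal ((s-r)^(α-1)) * G r = (fun _ => (0:ℝ≥0∞)) r := by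
            filter_upwards [hG0] with r hr
            rw [hr, mul_zero]
          rw [lintegral_congr_ae h2, lintegral_zero]
        rwa [hzero, zero_add] at h1
      calc ∫⁻ s in Ioc τ t', G s
          ≤ ∫⁻ s in Ioc τ t', (ENNReal.ofReal (A * s^(-β)) + ENNReal.ofReal (B/Real.Gamma α) *
              ∫⁻ r in Ioc τ s, ENNReal.ofReal ((s-r)^(α-1)) * G r) := by
            apply lintegral_mono_ae
            rw [ae_restrict_iff' measurableSet_Ioc]
            exact hbd
        _ = (∫⁻ s in Ioc τ t', ENNReal.ofReal (A * s^(-β)))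
            + ∫⁻ s in Ioc τ t', ENNReal.ofReal (B/Real.Gamma α) *
              ∫⁻ r in Ioc τ s, ENNReal.ofReal ((s-r)^(α-1)) * G r :=
          lintegral_add_left (by fun_prop) _
        _ ≤ ENNReal.ofReal (A * t'^(1-β) / (1-β))
            + ENNReal.ofReal (B / Real.Gamma α * ((t'-τ)^α / α)) * ∫⁻ s in Ioc τ t', G s := by
            apply add_le_add
            · calc ∫⁻ s in Ioc τ t', ENNReal.ofReal (A * s^(-β))
                  ≤ ∫⁻ s in Ioc 0 t', ENNReal.ofReal (A * s^(-β)) :=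
                    lintegral_mono_set (Ioc_subset_Ioc_left hτ0)
                _ = ENNReal.ofReal A * ∫⁻ s in Ioc 0 t', ENNReal.ofReal (s^(-β)) := by
                    simp_rw [ENNReal.ofReal_mul hA]
                    exact lintegral_const_mul' _ _ ENNReal.ofReal_ne_top
                _ = ENNReal.ofReal A * ENNReal.ofReal (t'^(1-β)/(1-β)) := by
                    have h2 := lint_rpow hβ' (le_of_lt (lt_of_le_of_lt hτ0 hτt'))
                    simp only [sub_zero] at h2
                    rw [h2, show (-β) + 1 = 1 - β by ring]
                _ = ENNReal.ofReal (A * t'^(1-β) / (1-β)) := by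
                    rw [← ENNReal.ofReal_mul hA, mul_div_assoc]
            · have hswap := swap_lemma hGm 0 (α-1) τ t'
              simp only [Real.rpow_zero, ENNReal.ofReal_one, one_mul] at hswap
              rw [lintegral_const_mul' _ _ ENNReal.ofReal_ne_top, hswap]
              have hptw : ∀ r ∈ Ioc τ t',
                  (∫⁻ s in Ioc r t', ENNReal.ofReal ((s-r)^(α-1))) * G r
                  ≤ ENNReal.ofReal ((t'-τ)^α / α) * G r := by
                intro r hr
                apply mul_le_mul_left
                have h3 := lint_rpow (by linarith : (-1:ℝ) < α - 1) hr.2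
                rw [show α - 1 + 1 = α by ring] at h3
                rw [h3]
                apply ENNReal.ofReal_le_ofReal
                apply div_le_div_of_nonneg_right ?_ hα0.le
                exact Real.rpow_le_rpow (by linarith [hr.2]) (by linarith [hr.1]) hα0.le
              calc ENNReal.ofReal (B/Real.Gamma α) * ∫⁻ r in Ioc τ t',
                    (∫⁻ s in Ioc r t', ENNReal.ofReal ((s-r)^(α-1))) * G r
                  ≤ ENNReal.ofReal (B/Real.Gamma α) * ∫⁻ r in Ioc τ t',
                      ENNReal.ofReal ((t'-τ)^α / α) * G r :=
                    mul_le_mul_right (setLIntegral_mono (by fun_prop) hptw) _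
                _ = ENNReal.ofReal (B / Real.Gamma α * ((t'-τ)^α / α)) *
                      ∫⁻ s in Ioc τ t', G s := by
                    rw [lintegral_const_mul' _ _ ENNReal.ofReal_ne_top, ← mul_assoc,
                      ← ENNReal.ofReal_mul hBγ]
    -- contraction window size
    obtain ⟨t1, ht10, ht1T, ht1q⟩ : ∃ t1, 0 < t1 ∧ t1 ≤ T ∧
        B/Real.Gamma α * (t1^α/α) ≤ 1/2 := by
      set D := (α * Real.Gamma α / (2*B))^(1/α) with hD
      have hDpos : 0 < D := Real.rpow_pos_of_pos (by positivity) _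
      refine ⟨min T D, lt_min hT hDpos, min_le_left _ _, ?_⟩
      have hmin0 : 0 ≤ min T D := le_min hT.le hDpos.le
      have hDα : (min T D)^α ≤ D^α := Real.rpow_le_rpow hmin0 (min_le_right _ _) hα0.le
      have hDval : D^α = α * Real.Gamma α / (2*B) := by
        rw [hD, ← Real.rpow_mul (by positivity), one_div, inv_mul_cancel₀ hα0.ne', Real.rpow_one]
      calc B/Real.Gamma α * ((min T D)^α/α)
          ≤ B/Real.Gamma α * ((α * Real.Gamma α/(2*B))/α) := by
            apply mul_le_mul_of_nonneg_left _ hBγ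
            apply div_le_div_of_nonneg_right ?_ hα0.le
            exact hDα.trans (le_of_eq hDval)
        _ = 1/2 := by
            field_simp
    rcases lt_or_eq_of_le hA with hApos | hAzero
    · -- A > 0
      have hG00 : ∀ᵐ s ∂(volume.restrict (Ioc (0:ℝ) 0)), G s = 0 := by
        rw [Set.Ioc_self, Measure.restrict_empty]
        simp
      have hA1 := stepA 0 t1 le_rfl ht10 ht1T hG00
      simp only [sub_zero] at hA1
      set W := ∫⁻ s in Ioc (0:ℝ) t1, G s with hW
      have hWfin : W ≠ ⊤ :=
        (lt_of_le_of_lt (lintegral_mono_set (Ioc_subset_Ioc_right ht1T)) hVfin).ne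
      have hE0 : (0:ℝ) ≤ A * t1^(1-β)/(1-β) :=
        div_nonneg (mul_nonneg hA (Real.rpow_nonneg ht10.le _)) (by linarith)
      have hq0 : (0:ℝ) ≤ B/Real.Gamma α * (t1^α/α) :=
        mul_nonneg hBγ (div_nonneg (Real.rpow_nonneg ht10.le _) hα0.le)
      have htr : W.toReal ≤ (A * t1^(1-β)/(1-β)) + (B/Real.Gamma α * (t1^α/α)) * W.toReal := by
        have hfin2 : ENNReal.ofReal (A * t1^(1-β)/(1-β))
            + ENNReal.ofReal (B/Real.Gamma α * (t1^α/α)) * W ≠ ⊤ :=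
          ENNReal.add_ne_top.2 ⟨ENNReal.ofReal_ne_top,
            ENNReal.mul_ne_top ENNReal.ofReal_ne_top hWfin⟩
        have h5 := ENNReal.toReal_mono hfin2 hA1
        rwa [ENNReal.toReal_add ENNReal.ofReal_ne_top
            (ENNReal.mul_ne_top ENNReal.ofReal_ne_top hWfin),
          ENNReal.toReal_mul, ENNReal.toReal_ofReal hE0, ENNReal.toReal_ofReal hq0] at h5
      have hW2 : W.toReal ≤ 2*(A * t1^(1-β)/(1-β)) := by
        nlinarith [mul_le_mul_of_nonneg_right ht1q (ENNReal.toReal_nonneg (a := W))]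
      have hVt1 : W ≤ ENNReal.ofReal (2*(A * t1^(1-β)/(1-β))) := by
        rw [← ENNReal.ofReal_toReal hWfin]
        exact ENNReal.ofReal_le_ofReal hW2
      obtain ⟨n, hn⟩ := exists_nat_gt (1/α)
      obtain ⟨a, c, ha, hc, hclaim⟩ := claim n
      set E : ℝ := ((n:ℝ)+1)*α - 1 with hE
      have hEnn : (0:ℝ) ≤ E := by
        have h6 : 1/α < (n:ℝ) := hn
        have h7 : 1 < (n:ℝ)*α := by
          rw [div_lt_iff₀ hα0] at h6
          linarith
        rw [hE]; nlinarith
      -- region (0, t1]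
      set K2 : ℝ := c * T^E * (2*(t1^(1-β)/(1-β))) with hK2
      have hK2nn : 0 ≤ K2 := by
        have h8 : (0:ℝ) ≤ T^E := Real.rpow_nonneg hT.le _
        have h9 : (0:ℝ) ≤ t1^(1-β) := Real.rpow_nonneg ht10.le _
        have h10 : (0:ℝ) < 1 - β := by linarith
        rw [hK2]; positivity
      have hreg1 : ∀ t ∈ Ioc (0:ℝ) t1, y t ≤ (a + K2 * T^β) * A * t^(-β) := by
        intro t ht'
        have htT : t ∈ Ioc (0:ℝ) T := ⟨ht'.1, ht'.2.trans ht1T⟩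
        have h11 := hclaim t htT
        have hker : ∫⁻ s in Ioc 0 t, ENNReal.ofReal ((t-s)^E) * G s
            ≤ ENNReal.ofReal (T^E) * W := by
          calc ∫⁻ s in Ioc 0 t, ENNReal.ofReal ((t-s)^E) * G s
              ≤ ∫⁻ s in Ioc 0 t, ENNReal.ofReal (T^E) * G s := by
                apply setLIntegral_mono (by fun_prop)
                intro s hs
                apply mul_le_mul_left
                apply ENNReal.ofReal_le_ofReal
                exact Real.rpow_le_rpow (by linarith [hs.2]) (by linarith [hs.1, htT.2]) hEnn
            _ = ENNReal.ofReal (T^E) * ∫⁻ s in Ioc 0 t, G s :=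
                lintegral_const_mul' _ _ ENNReal.ofReal_ne_top
            _ ≤ ENNReal.ofReal (T^E) * W :=
                mul_le_mul_right (lintegral_mono_set (Ioc_subset_Ioc_right ht'.2)) _
        have h12 : ENNReal.ofReal (y t)
            ≤ ENNReal.ofReal (A * a * t^(-β)) + ENNReal.ofReal (A * K2) := by
          refine h11.trans ?_
          apply add_le_add_right
          calc ENNReal.ofReal c * ∫⁻ s in Ioc 0 t, ENNReal.ofReal ((t-s)^E) * G s
              ≤ ENNReal.ofReal c * (ENNReal.ofReal (T^E) *
                  ENNReal.ofReal (2*(A * t1^(1-β)/(1-β)))) :=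
                mul_le_mul_right (hker.trans (mul_le_mul_right hVt1 _)) _
            _ = ENNReal.ofReal (c * (T^E * (2*(A * t1^(1-β)/(1-β))))) := by
                rw [← ENNReal.ofReal_mul (Real.rpow_nonneg hT.le _),
                  ← ENNReal.ofReal_mul hc]
            _ = ENNReal.ofReal (A * K2) := by
                rw [hK2]
                congr 1
                ring
        rw [← ENNReal.ofReal_add (mul_nonneg (mul_nonneg hA ha) (Real.rpow_nonneg ht'.1.le _))
          (mul_nonneg hA hK2nn)] at h12
        have h13 : y t ≤ A * a * t^(-β) + A * K2 := by
          have h14 : (0:ℝ) ≤ A * a * t^(-β) + A * K2 :=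
            add_nonneg (mul_nonneg (mul_nonneg hA ha) (Real.rpow_nonneg ht'.1.le _))
              (mul_nonneg hA hK2nn)
          exact (ENNReal.ofReal_le_ofReal_iff h14).1 h12
        -- A * K2 ≤ K2 * T^β * A * t^(-β)
        have h15 : T^(-β) ≤ t^(-β) :=
          Real.rpow_le_rpow_of_nonpos ht'.1 (ht'.2.trans ht1T) (by linarith)
        have h16 : T^β * T^(-β) = 1 := by
          rw [← Real.rpow_add hT]; norm_num
        have h17 : (1:ℝ) ≤ T^β * t^(-β) := by
          rw [← h16]
          exact mul_le_mul_of_nonneg_left h15 (Real.rpow_nonneg hT.le _)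
        have h18 : A * K2 ≤ K2 * T^β * A * t^(-β) := by
          have := mul_le_mul_of_nonneg_left h17 (mul_nonneg hA hK2nn)
          calc A * K2 = A * K2 * 1 := by ring
            _ ≤ A * K2 * (T^β * t^(-β)) := this
            _ = K2 * T^β * A * t^(-β) := by ring
        calc y t ≤ A * a * t^(-β) + A * K2 := h13
          _ ≤ A * a * t^(-β) + K2 * T^β * A * t^(-β) := by linarith
          _ = (a + K2 * T^β) * A * t^(-β) := by ring
      -- region (t1, T]
      have hcont2 : ContinuousOn y (Icc t1 T) :=
        hy.mono (fun x hx => ⟨lt_of_lt_of_le ht10 hx.1, hx.2⟩)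
      obtain ⟨x₀, hx₀mem, hx₀max⟩ := isCompact_Icc.exists_isMaxOn (nonempty_Icc.2 ht1T) hcont2
      have hM0 : 0 ≤ y x₀ := hpos x₀ ⟨lt_of_lt_of_le ht10 hx₀mem.1, hx₀mem.2⟩
      refine ⟨(a + K2 * T^β) + (y x₀ + 1) * T^β / A + 1, by positivity, fun t ht' => ?_⟩
      have htβ : (0:ℝ) ≤ A * t^(-β) := mul_nonneg hA (Real.rpow_nonneg ht'.1.le _)
      rcases le_or_gt t t1 with hcase2 | hcase2
      · have hcoef : (a + K2 * T^β) ≤ (a + K2 * T^β) + (y x₀ + 1) * T^β / A + 1 := by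
          have h20 : 0 ≤ (y x₀ + 1) * T^β / A :=
            div_nonneg (mul_nonneg (by linarith) (Real.rpow_nonneg hT.le _)) hApos.le
          linarith
        calc y t ≤ (a + K2 * T^β) * A * t^(-β) := hreg1 t ⟨ht'.1, hcase2⟩
          _ ≤ ((a + K2 * T^β) + (y x₀ + 1) * T^β / A + 1) * A * t^(-β) := by
              apply mul_le_mul_of_nonneg_right _ (Real.rpow_nonneg ht'.1.le _)
              exact mul_le_mul_of_nonneg_right hcoef hA
      · have h21 : y t ≤ y x₀ := hx₀max ⟨hcase2.le, ht'.2⟩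
        have h15 : T^(-β) ≤ t^(-β) :=
          Real.rpow_le_rpow_of_nonpos ht'.1 ht'.2 (by linarith)
        have h16 : T^β * T^(-β) = 1 := by rw [← Real.rpow_add hT]; norm_num
        have hdnn : 0 ≤ (y x₀ + 1) * T^β / A :=
          div_nonneg (mul_nonneg (by linarith) (Real.rpow_nonneg hT.le _)) hApos.le
        have h22 : ((y x₀ + 1) * T^β / A) * A * T^(-β) = y x₀ + 1 := by
          rw [div_mul_cancel₀ _ hApos.ne', mul_assoc, h16, mul_one]
        have hcoefC : (y x₀ + 1) * T^β / A
            ≤ (a + K2 * T^β) + (y x₀ + 1) * T^β / A + 1 := by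
          have h23 : 0 ≤ K2 * T^β := mul_nonneg hK2nn (Real.rpow_nonneg hT.le _)
          linarith
        calc y t ≤ y x₀ := h21
          _ ≤ y x₀ + 1 := by linarith
          _ = ((y x₀ + 1) * T^β / A) * A * T^(-β) := h22.symm
          _ ≤ ((y x₀ + 1) * T^β / A) * A * t^(-β) := by
              apply mul_le_mul_of_nonneg_left h15 (mul_nonneg hdnn hApos.le)
          _ ≤ ((a + K2 * T^β) + (y x₀ + 1) * T^β / A + 1) * A * t^(-β) := by
              apply mul_le_mul_of_nonneg_right _ (Real.rpow_nonneg ht'.1.le _)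
              exact mul_le_mul_of_nonneg_right hcoefC hA
    · -- A = 0
      have hA0 : A = 0 := hAzero.symm
      set P : Set ℝ := {τ | τ ∈ Icc (0:ℝ) T ∧ ∫⁻ s in Ioc (0:ℝ) τ, G s = 0} with hP
      have h0P : (0:ℝ) ∈ P := by
        refine ⟨⟨le_rfl, hT.le⟩, ?_⟩
        rw [Set.Ioc_self, Measure.restrict_empty]
        simp
      have hPbdd : BddAbove P := ⟨T, fun τ hτ => hτ.1.2⟩
      set τs := sSup P with hτs
      have hτs0 : 0 ≤ τs := le_csSup hPbdd h0P
      have hτsT : τs ≤ T := csSup_le ⟨0, h0P⟩ (fun τ hτ => hτ.1.2)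
      have hmem : ∀ τ, τ < τs → ∫⁻ s in Ioc (0:ℝ) τ, G s = 0 := by
        intro τ h2
        obtain ⟨p, hpP, hpτ⟩ := exists_lt_of_lt_csSup ⟨0, h0P⟩ h2
        refine le_antisymm (le_trans (lintegral_mono_set
          (Ioc_subset_Ioc_right hpτ.le)) (le_of_eq hpP.2)) zero_le
      have hVτs : ∫⁻ s in Ioc (0:ℝ) τs, G s = 0 := by
        rcases eq_or_lt_of_le hτs0 with h0 | h0
        · rw [← h0, Set.Ioc_self, Measure.restrict_empty]; simp
        · set νm : Measure ℝ := volume.withDensity G with hνm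
          have hνapp : ∀ s : Set ℝ, MeasurableSet s → νm s = ∫⁻ x in s, G x :=
            fun s hs => withDensity_apply G hs
          have hsub : Ioo (0:ℝ) τs ⊆ ⋃ n : ℕ, Ioc (0:ℝ) (τs - τs/((n:ℝ)+2)) := by
            intro x hx
            have hgap : 0 < τs - x := by linarith [hx.2]
            obtain ⟨n, hn⟩ := exists_nat_gt (τs/(τs - x))
            refine mem_iUnion.2 ⟨n, hx.1, ?_⟩
            have hn2 : τs/(τs-x) < (n:ℝ)+2 := by linarith [hn]
            have h3 : τs < ((n:ℝ)+2)*(τs-x) := (div_lt_iff₀ hgap).1 hn2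
            have hpos2 : (0:ℝ) < (n:ℝ)+2 := by positivity
            have h4 : τs/((n:ℝ)+2) < τs - x := (div_lt_iff₀ hpos2).2 (by linarith)
            linarith
          have hIoo : νm (Ioo 0 τs) = 0 := by
            apply measure_mono_null hsub
            rw [measure_iUnion_null_iff]
            intro n
            have hpos2 : (0:ℝ) < (n:ℝ)+2 := by positivity
            have hlt2 : τs - τs/((n:ℝ)+2) < τs := by
              have : 0 < τs/((n:ℝ)+2) := div_pos h0 hpos2
              linarith
            rw [hνapp _ measurableSet_Ioc]
            exact hmem _ hlt2
          have hsingle : νm {τs} = 0 :=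
            (withDensity_absolutelyContinuous volume G) (measure_singleton τs)
          have h5 : νm (Ioc 0 τs) = 0 := by
            apply measure_mono_null (?_ : Ioc (0:ℝ) τs ⊆ Ioo 0 τs ∪ {τs})
            · exact measure_union_null hIoo hsingle
            · intro x hx
              rcases eq_or_lt_of_le hx.2 with hxe | hxl
              · exact Or.inr (by simp [hxe])
              · exact Or.inl ⟨hx.1, hxl⟩
          rwa [hνapp _ measurableSet_Ioc] at h5
      have hτsTeq : τs = T := by
        by_contra hne
        have hlt : τs < T := lt_of_le_of_ne hτsT hne
        set t' := min (τs + t1) T with ht'def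
        have ht'1 : τs < t' := lt_min (by linarith) hlt
        have ht'2 : t' ≤ T := min_le_right _ _
        have ht'3 : t' - τs ≤ t1 := by
          have := min_le_left (τs + t1) T
          rw [ht'def]; linarith [min_le_left (τs + t1) T]
        have hG0 : ∀ᵐ s ∂(volume.restrict (Ioc (0:ℝ) τs)), G s = 0 := by
          have := (lintegral_eq_zero_iff hGm).1 hVτs
          filter_upwards [this] with s hs
          exact hs
        have hstep := stepA τs t' hτs0 ht'1 ht'2 hG0
        rw [hA0] at hstep
        simp only [zero_mul, zero_div, ENNReal.ofReal_zero, zero_add] at hstep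
        have hq0' : (0:ℝ) ≤ B/Real.Gamma α * ((t'-τs)^α/α) :=
          mul_nonneg hBγ (div_nonneg (Real.rpow_nonneg (by linarith) _) hα0.le)
        have hqle : B/Real.Gamma α * ((t'-τs)^α/α) ≤ 1/2 := by
          refine le_trans ?_ ht1q
          apply mul_le_mul_of_nonneg_left _ hBγ
          apply div_le_div_of_nonneg_right _ hα0.le
          exact Real.rpow_le_rpow (by linarith) ht'3 hα0.le
        set W2 := ∫⁻ s in Ioc τs t', G s with hW2'
        have hW2fin : W2 ≠ ⊤ := by
          refine (lt_of_le_of_lt (lintegral_mono_set ?_) hVfin).ne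
          intro x hx
          exact ⟨lt_of_le_of_lt hτs0 hx.1, hx.2.trans ht'2⟩
        have hW2tr : W2.toReal ≤ (B/Real.Gamma α * ((t'-τs)^α/α)) * W2.toReal := by
          have h6 := ENNReal.toReal_mono
            (ENNReal.mul_ne_top ENNReal.ofReal_ne_top hW2fin) hstep
          rwa [ENNReal.toReal_mul, ENNReal.toReal_ofReal hq0'] at h6
        have hW20 : W2 = 0 := by
          have h7 : W2.toReal ≤ 0 := by
            nlinarith [mul_le_mul_of_nonneg_right hqle (ENNReal.toReal_nonneg (a := W2))]
          have h8 : W2.toReal = 0 := le_antisymm h7 ENNReal.toReal_nonneg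
          rw [← ENNReal.ofReal_toReal hW2fin, h8]
          simp
        have ht'P : t' ∈ P := by
          refine ⟨⟨by linarith, ht'2⟩, ?_⟩
          have hU : Ioc (0:ℝ) t' = Ioc 0 τs ∪ Ioc τs t' :=
            (Ioc_union_Ioc_eq_Ioc hτs0 (le_of_lt ht'1)).symm
          rw [hU, lintegral_union measurableSet_Ioc (Ioc_disjoint_Ioc_of_le le_rfl), hVτs, ← hW2', hW20]
          simp
        have := le_csSup hPbdd ht'P
        linarith
      have hVT : ∫⁻ s in Ioc (0:ℝ) T, G s = 0 := by rw [← hτsTeq]; exact hVτs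
      have hyae : ∀ᵐ s ∂volume, s ∈ Ioc (0:ℝ) T → y s ≤ 0 := by
        have h9 := (lintegral_eq_zero_iff hGm).1 hVT
        have h9' : ∀ᵐ s ∂volume, s ∈ Ioc (0:ℝ) T → G s = 0 :=
          (ae_restrict_iff' measurableSet_Ioc).1 h9
        have h10 := (ae_restrict_iff' measurableSet_Ioc).1 (hGae T le_rfl)
        filter_upwards [h9', h10] with s hs1 hs2 hs
        have h11 : ENNReal.ofReal (y s) = 0 := by rw [hs2 hs, hs1 hs]
        exact ENNReal.ofReal_eq_zero.1 h11
      refine ⟨1, one_pos, fun t ht' => ?_⟩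
      rw [hA0]
      simp only [mul_zero, zero_mul]
      by_contra hyt
      push_neg at hyt
      have hcw : ContinuousWithinAt y (Ioc 0 T) t := hy t ht'
      have hev : ∀ᶠ s in nhdsWithin t (Ioc 0 T), y s ∈ Ioi (y t / 2) :=
        hcw (Ioi_mem_nhds (by linarith : y t / 2 < y t))
      obtain ⟨U, hUopen, htU, hUsub⟩ := mem_nhdsWithin.1 hev
      obtain ⟨δ, hδ0, hball⟩ := Metric.isOpen_iff.1 hUopen t htU
      set δ' := min δ t with hδ'def
      have hδ'0 : 0 < δ' := lt_min hδ0 ht'.1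
      have hIsub : Ioo (t - δ') t ⊆ {s | s ∈ Ioc (0:ℝ) T ∧ ¬ y s ≤ 0} := by
        intro x hx
        have hxU : x ∈ U := by
          apply hball
          rw [Metric.mem_ball, Real.dist_eq, abs_lt]
          constructor
          · have := min_le_left δ t
            linarith [hx.1]
          · linarith [hx.2]
        have hxIoc : x ∈ Ioc (0:ℝ) T := by
          have := min_le_right δ t
          exact ⟨by linarith [hx.1], le_trans hx.2.le ht'.2⟩
        have := hUsub ⟨hxU, hxIoc⟩
        refine ⟨hxIoc, ?_⟩
        simp only [mem_setOf_eq, mem_Ioi] at this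
        linarith
      have hnull : volume (Ioo (t - δ') t) = 0 := by
        have hbad : volume {x | ¬ (x ∈ Ioc (0:ℝ) T → y x ≤ 0)} = 0 := ae_iff.1 hyae
        apply measure_mono_null _ hbad
        intro x hx
        obtain ⟨hx1, hx2⟩ := hIsub hx
        exact fun himp => hx2 (himp hx1)
      rw [Real.volume_Ioo, show t - (t - δ') = δ' by ring] at hnull
      have := ENNReal.ofReal_eq_zero.1 hnull
      linarith
end
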